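/- arXiv:2006.15646 — 11 statements merged into one kernel-verified Lean document; each statement's English description precedes it below -/
import Mathlib

section
/- Let X be a compact topological space and F a subalgebra of C(X, ℝ) containing the constant function 1. Then the uniform closure of F equals the set of continuous real-valued functions f on X such that sep(F) ⊆ sep(f), i.e., such that f(x) = f(x') whenever g(x) = g(x') for all g ∈ F. -/
/-!
A function `f` with `sep(F) ⊆ sep(f)` is the same thing as a continuous function on the compact
quotient `X / sep(F)`. On that quotient `F` descends to a subalgebra which separates points, so by
Stone–Weierstrass it is dense there, and composing back with the quotient map approximates `f`
uniformly by elements of `F`. Conversely, `sep(F) ⊆ sep(f)` is a closed condition on `f`.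
-/

open Set

namespace ContinuousMap

variable {X Y : Type*} [TopologicalSpace X] [TopologicalSpace Y]

/-- The relation `sep(S)`; `sep(S) ⊆ sep(f)` then reads `sepSetoid S ≤ Setoid.ker f`. -/
def sepSetoid (S : Set C(X, Y)) : Setoid X where
  r x x' := ∀ g ∈ S, g x = g x'
  iseqv := ⟨fun _ _ _ => rfl, fun h g hg => (h g hg).symm,
    fun h₁ h₂ g hg => (h₁ g hg).trans (h₂ g hg)⟩

theorem isClosed_setOf_sepSetoid_le_ker [T2Space Y] (S : Set C(X, Y)) :
    IsClosed {f : C(X, Y) | sepSetoid S ≤ Setoid.ker f} := by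
  simp only [Setoid.le_def, ofPred_forall]
  exact isClosed_iInter fun x => isClosed_iInter fun x' => isClosed_iInter fun _ =>
    isClosed_eq (continuous_eval_const x) (continuous_eval_const x')

theorem closure_subset_setOf_sepSetoid_le_ker [T2Space Y] (S : Set C(X, Y)) :
    closure S ⊆ {f : C(X, Y) | sepSetoid S ≤ Setoid.ker f} :=
  closure_minimal (fun g hg _ _ h => h g hg) (isClosed_setOf_sepSetoid_le_ker S)

def quotientMk (s : Setoid X) : C(X, Quotient s) :=
  ⟨Quotient.mk s, continuous_quotient_mk'⟩

def quotientLift {s : Setoid X} (f : C(X, Y)) (h : s ≤ Setoid.ker f) : C(Quotient s, Y) :=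
  ⟨Quotient.lift f fun _ _ hxy => h hxy, continuous_quot_lift _ f.continuous⟩

theorem quotientLift_comp_quotientMk {s : Setoid X} (f : C(X, Y)) (h : s ≤ Setoid.ker f) :
    (quotientLift f h).comp (quotientMk s) = f :=
  rfl

theorem separatesPoints_comap_quotientMk_sepSetoid (F : Subalgebra ℝ C(X, ℝ)) :
    (F.comap (compRightAlgHom ℝ ℝ (quotientMk (sepSetoid (F : Set C(X, ℝ)))))).SeparatesPoints := by
  rintro ⟨x⟩ ⟨x'⟩ hxx'
  obtain ⟨g, hgF, hgx⟩ : ∃ g ∈ F, g x ≠ g x' := by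
    by_contra! h
    exact hxx' (Quotient.sound h)
  refine ⟨_, ⟨quotientLift g fun _ _ h => h g hgF, ?_, rfl⟩, hgx⟩
  simpa only [Subalgebra.mem_comap, compRightAlgHom_apply, quotientLift_comp_quotientMk]

theorem setOf_sepSetoid_le_ker_subset_closure [CompactSpace X] (F : Subalgebra ℝ C(X, ℝ)) :
    {f : C(X, ℝ) | sepSetoid (F : Set C(X, ℝ)) ≤ Setoid.ker f} ⊆ closure F := by
  intro f hf
  have hlift := continuousMap_mem_subalgebra_closure_of_separatesPoints _
    (separatesPoints_comap_quotientMk_sepSetoid F) (quotientLift f hf)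
  rw [← SetLike.mem_coe, Subalgebra.topologicalClosure_coe] at hlift
  have hf_mem := map_mem_closure (t := (F : Set C(X, ℝ))) (compRightAlgHom_continuous ℝ ℝ _) hlift
    fun g hg => hg
  rwa [compRightAlgHom_apply, quotientLift_comp_quotientMk] at hf_mem

end ContinuousMap

/-- Fine-grained Stone-Weierstrass: the closure of a unital subalgebra of `C(X, ℝ)`
is the set of continuous functions at least as separating. -/
theorem stmt1 {X : Type*} [TopologicalSpace X] [CompactSpace X]
    (F : Subalgebra ℝ C(X, ℝ)) :
    closure (F : Set C(X, ℝ)) =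
      {f : C(X, ℝ) | ∀ x x' : X, (∀ g ∈ F, g x = g x') → f x = f x'} :=
  (ContinuousMap.closure_subset_setOf_sepSetoid_le_ker _).antisymm
    (ContinuousMap.setOf_sepSetoid_le_ker_subset_closure F)
end

section
/- Let A be a subalgebra of ℝ^p (with coordinatewise multiplication) such that for every index i there exists x ∈ A with x_i ≠ 0, and for every pair of distinct indices i ≠ j there exists x ∈ A with x_i ≠ x_j. Then A = ℝ^p. -/
/-!
Each standard basis vector `eᵢ` lies in `A`. Rescaling an element that is nonzero at `i`
gives `a ∈ A` with `aᵢ = 1`; for `j ≠ i` and `x ∈ A` with `xᵢ ≠ xⱼ`, the element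
`(a * x - xⱼ • a) / (xᵢ - xⱼ)` of `A` is `1` at `i` and `0` at `j`. The product of `a` with these
elements over all `j ≠ i` is `eᵢ`, and the `eᵢ` span `ℝ^p`.
-/

theorem mul_prod_mem {M S κ : Type*} [CommMonoid M] [SetLike S M] [MulMemClass S M] {s : S}
    {a : M} (ha : a ∈ s) {b : κ → M} (t : Finset κ) (hb : ∀ k ∈ t, b k ∈ s) :
    a * ∏ k ∈ t, b k ∈ s := by
  classical
  induction t using Finset.induction_on with
  | empty => simpa using ha
  | insert k t hk ih =>
    rw [Finset.prod_insert hk, mul_left_comm]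
    exact mul_mem (hb k (Finset.mem_insert_self k t))
      (ih fun l hl => hb l (Finset.mem_insert_of_mem hl))

namespace NonUnitalSubalgebra

variable {K ι : Type*} [Field K] {A : NonUnitalSubalgebra K (ι → K)}

theorem exists_mem_apply_eq_one {i : ι} (h : ∃ x ∈ A, x i ≠ 0) : ∃ a ∈ A, a i = 1 := by
  obtain ⟨x, hx, hxi⟩ := h
  exact ⟨(x i)⁻¹ • x, SMulMemClass.smul_mem _ hx, by simp [hxi]⟩

theorem exists_mem_apply_eq_one_apply_eq_zero {i j : ι} (h1 : ∃ x ∈ A, x i ≠ 0)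
    (h2 : ∃ x ∈ A, x i ≠ x j) : ∃ b ∈ A, b i = 1 ∧ b j = 0 := by
  obtain ⟨a, ha, hai⟩ := exists_mem_apply_eq_one h1
  obtain ⟨x, hx, hxij⟩ := h2
  refine ⟨(x i - x j)⁻¹ • (a * x - x j • a),
    SMulMemClass.smul_mem _ (sub_mem (mul_mem ha hx) (SMulMemClass.smul_mem _ ha)), ?_, ?_⟩
  · simp [hai, sub_ne_zero.mpr hxij]
  · simp [mul_comm]

theorem single_one_mem [Fintype ι] [DecidableEq ι] {i : ι} (h1 : ∃ x ∈ A, x i ≠ 0)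
    (h2 : ∀ j ≠ i, ∃ x ∈ A, x i ≠ x j) : Pi.single i 1 ∈ A := by
  have hsep (j : ι) : ∃ b ∈ A, b i = 1 ∧ (j ≠ i → b j = 0) := by
    by_cases hj : j = i
    · obtain ⟨a, ha, hai⟩ := exists_mem_apply_eq_one h1
      exact ⟨a, ha, hai, fun h => (h hj).elim⟩
    · obtain ⟨b, hb, hbi, hbj⟩ := exists_mem_apply_eq_one_apply_eq_zero h1 (h2 j hj)
      exact ⟨b, hb, hbi, fun _ => hbj⟩
  choose b hbA hbi hbj using hsep
  have hprod : ∏ j, b j = Pi.single i 1 := by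
    ext k
    rw [Finset.prod_apply]
    by_cases hk : k = i
    · subst hk
      simp [hbi]
    · rw [Pi.single_eq_of_ne hk]
      exact Finset.prod_eq_zero (Finset.mem_univ k) (hbj k hk)
  rw [← hprod, ← Finset.mul_prod_erase _ _ (Finset.mem_univ i)]
  exact mul_prod_mem (hbA i) _ fun j _ => hbA j

theorem coe_eq_univ_of_forall_single_one_mem {R : Type*} [CommSemiring R] [Fintype ι]
    [DecidableEq ι] {A : NonUnitalSubalgebra R (ι → R)} (h : ∀ i, Pi.single i 1 ∈ A) :
    (A : Set (ι → R)) = Set.univ := by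
  refine Set.eq_univ_of_forall fun x => ?_
  rw [← Finset.univ_sum_single x]
  refine sum_mem fun i _ => ?_
  rw [← mul_one (x i), ← smul_eq_mul, Pi.single_smul']
  exact SMulMemClass.smul_mem _ (h i)

end NonUnitalSubalgebra

/-- A (possibly non-unital) subalgebra of `ℝ^p` whose coordinates are nonvanishing and
pairwise separated is all of `ℝ^p`. -/
theorem stmt3 {p : ℕ} (A : NonUnitalSubalgebra ℝ (Fin p → ℝ))
    (h1 : ∀ i : Fin p, ∃ x ∈ A, x i ≠ 0)
    (h2 : ∀ i j : Fin p, i ≠ j → ∃ x ∈ A, x i ≠ x j) :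
    (A : Set (Fin p → ℝ)) = Set.univ :=
  NonUnitalSubalgebra.coe_eq_univ_of_forall_single_one_mem
    fun i => NonUnitalSubalgebra.single_one_mem (h1 i) fun j hj => h2 i j hj.symm
end

section
/- Let A be a subalgebra of ℝ^p with coordinatewise multiplication. Define J = {j : ∀x ∈ A, x_j = 0} and I = {(i,j) with i,j ∉ J : ∀x ∈ A, x_i = x_j}. Then A = {x ∈ ℝ^p : x_i = x_j for all (i,j) ∈ I, and x_j = 0 for all j ∈ J}. -/
/-!
Call `i` and `j` tied if `x i = x j` for all `x ∈ A`. If `g ∈ A` has `g i ≠ 0` and `x ∈ A` has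
`x i ≠ x j`, then `g * x - x j • g ∈ A` is still nonzero at `i` and vanishes at `j` and wherever
`g` does; iterating gives `e ∈ A` with `e i = 1` vanishing at every coordinate not tied to `i`.
A vector `y` satisfying the constraints is then interpolated by `A` one coordinate `k` at a time,
correcting the current interpolant `z` by `(y k - z k) • e`: the correction cannot spoil a
coordinate `j` already matched, since either `e j = 0` or `j` is tied to `k`, and then
`z k = z j = y j = y k`.
-/

namespace NonUnitalSubalgebra

variable {K ι : Type*} [Field K] (A : NonUnitalSubalgebra K (ι → K))

theorem exists_mem_apply_eq_one_forall_apply_eq_zero {i : ι} (hi : ∃ c ∈ A, c i ≠ 0)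
    (s : Finset ι) (hs : ∀ j ∈ s, ∃ x ∈ A, x i ≠ x j) :
    ∃ e ∈ A, e i = 1 ∧ ∀ j ∈ s, e j = 0 := by
  classical
  suffices ∃ g ∈ A, g i ≠ 0 ∧ ∀ j ∈ s, g j = 0 by
    obtain ⟨g, hgA, hgi, hgs⟩ := this
    refine ⟨(g i)⁻¹ • g, A.smul_mem _ hgA, inv_mul_cancel₀ hgi, fun j hj => ?_⟩
    simp [hgs j hj]
  induction s using Finset.induction_on with
  | empty => simpa using hi
  | insert j s _ ih =>
    obtain ⟨g, hgA, hgi, hgs⟩ := ih fun k hk => hs k (Finset.mem_insert_of_mem hk)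
    obtain ⟨x, hxA, hxij⟩ := hs j (Finset.mem_insert_self j s)
    have hval : ∀ k, (g * x - x j • g) k = g k * (x k - x j) := fun k => by
      simp only [Pi.sub_apply, Pi.mul_apply, Pi.smul_apply, smul_eq_mul]; ring
    refine ⟨g * x - x j • g, A.sub_mem (A.mul_mem hgA hxA) (A.smul_mem _ hgA), ?_, ?_⟩
    · rw [hval]; exact mul_ne_zero hgi (sub_ne_zero.mpr hxij)
    · intro k hk
      rw [hval]
      rcases Finset.mem_insert.mp hk with rfl | hk
      · rw [sub_self, mul_zero]
      · rw [hgs k hk, zero_mul]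

theorem exists_mem_eqOn_finset {y : ι → K}
    (hy_zero : ∀ j, (∀ x ∈ A, x j = 0) → y j = 0)
    (hy_eq : ∀ i j, (∃ x ∈ A, x i ≠ 0) → (∀ x ∈ A, x i = x j) → y i = y j) (s : Finset ι) :
    ∃ z ∈ A, ∀ k ∈ s, z k = y k := by
  classical
  induction s using Finset.induction_on with
  | empty => exact ⟨0, A.zero_mem, by simp⟩
  | insert k s _ ih =>
    obtain ⟨z, hzA, hzs⟩ := ih
    by_cases hk : ∀ x ∈ A, x k = 0
    · refine ⟨z, hzA, Finset.forall_mem_insert _ _ _ |>.mpr ⟨?_, hzs⟩⟩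
      rw [hk z hzA, hy_zero k hk]
    push Not at hk
    obtain ⟨e, heA, hek, he⟩ := A.exists_mem_apply_eq_one_forall_apply_eq_zero hk
      (s.filter fun j => ∃ x ∈ A, x k ≠ x j) fun j hj => (Finset.mem_filter.mp hj).2
    refine ⟨z + (y k - z k) • e, A.add_mem hzA (A.smul_mem _ heA),
      Finset.forall_mem_insert _ _ _ |>.mpr ⟨by simp [hek], fun j hj => ?_⟩⟩
    by_cases htied : ∀ x ∈ A, x k = x j
    · have : y k - z k = 0 := by
        rw [hy_eq k j hk htied, htied z hzA, hzs j hj, sub_self]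
      simp [this, hzs j hj]
    · push Not at htied
      simp [he j (Finset.mem_filter.mpr ⟨hj, htied⟩), hzs j hj]

theorem mem_iff_of_finite [Finite ι] {y : ι → K} :
    y ∈ A ↔ (∀ j, (∀ x ∈ A, x j = 0) → y j = 0) ∧
      ∀ i j, (∃ x ∈ A, x i ≠ 0) → (∀ x ∈ A, x i = x j) → y i = y j := by
  classical
  have := Fintype.ofFinite ι
  refine ⟨fun hy => ⟨fun j hj => hj y hy, fun i j _ hij => hij y hy⟩, fun ⟨hy_zero, hy_eq⟩ => ?_⟩
  obtain ⟨z, hzA, hz⟩ := A.exists_mem_eqOn_finset hy_zero hy_eq Finset.univ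
  rwa [← funext fun k => hz k (Finset.mem_univ k)]

end NonUnitalSubalgebra

/-- Characterization of the subalgebras of `ℝ^p`. -/
theorem stmt4 {p : ℕ} (A : NonUnitalSubalgebra ℝ (Fin p → ℝ))
    (J : Set (Fin p)) (I : Set (Fin p × Fin p))
    (hJ : J = {j : Fin p | ∀ x ∈ A, x j = 0})
    (hI : I = {ij : Fin p × Fin p | ij.1 ∉ J ∧ ij.2 ∉ J ∧ ∀ x ∈ A, x ij.1 = x ij.2}) :
    (A : Set (Fin p → ℝ)) =
      {x : Fin p → ℝ | (∀ ij ∈ I, x ij.1 = x ij.2) ∧ ∀ j ∈ J, x j = 0} := by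
  subst hJ hI
  ext y
  rw [SetLike.mem_coe, A.mem_iff_of_finite]
  simp only [Set.mem_ofPred_eq, Prod.forall, not_forall, exists_prop]
  constructor
  · rintro ⟨hy_zero, hy_eq⟩
    exact ⟨fun i j ⟨hi, _, hij⟩ => hy_eq i j hi hij, hy_zero⟩
  · rintro ⟨hy_eq, hy_zero⟩
    refine ⟨hy_zero, fun i j hi hij => hy_eq i j ⟨hi, ?_, hij⟩⟩
    obtain ⟨x, hxA, hxi⟩ := hi
    exact ⟨x, hxA, hij x hxA ▸ hxi⟩
end

section
/- Let A be a subalgebra of ℝ^p containing the all-ones vector, and suppose that for every pair of distinct indices i ≠ j there exists x ∈ A with x_i ≠ x_j. Then A contains a vector all of whose coordinates are pairwise distinct. -/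
/-! A vector space over an infinite field is not a finite union of proper subspaces. Applied to
the kernels of the functionals `x ↦ x i - x j` on `A`, which are proper by the separation
hypothesis, this yields an `x ∈ A` outside all of them. -/

theorem LinearMap.exists_forall_apply_ne_zero {k V ι : Type*} [DivisionRing k] [Infinite k]
    [AddCommGroup V] [Module k V] [Finite ι] {W : ι → Type*} [∀ i, AddCommGroup (W i)]
    [∀ i, Module k (W i)] (f : ∀ i, V →ₗ[k] W i) (hf : ∀ i, f i ≠ 0) :
    ∃ v, ∀ i, f i v ≠ 0 := by
  by_contra! h
  have hcover : ⋃ i, (LinearMap.ker (f i) : Set V) = Set.univ :=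
    Set.eq_univ_of_forall fun v => Set.mem_iUnion.mpr (h v)
  obtain ⟨i, hi⟩ := Subspace.exists_eq_top_of_iUnion_eq_univ hcover
  exact hf i (LinearMap.ker_eq_top.mp hi)

theorem Submodule.exists_injective_mem_of_separates {k ι : Type*} [DivisionRing k] [Infinite k]
    [Finite ι] (E : Submodule k (ι → k)) (hE : ∀ i j, i ≠ j → ∃ x ∈ E, x i ≠ x j) :
    ∃ x ∈ E, Function.Injective x := by
  let f : ∀ q : {q : ι × ι // q.1 ≠ q.2}, E →ₗ[k] k := fun q =>
    (LinearMap.proj (R := k) (φ := fun _ : ι => k) q.1.1 - LinearMap.proj q.1.2) ∘ₗ E.subtype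
  have hf : ∀ q, f q ≠ 0 := by
    rintro ⟨⟨i, j⟩, hij⟩ hq
    obtain ⟨x, hxE, hx⟩ := hE i j hij
    exact hx (sub_eq_zero.mp (LinearMap.congr_fun hq ⟨x, hxE⟩))
  obtain ⟨⟨x, hxE⟩, hx⟩ := LinearMap.exists_forall_apply_ne_zero f hf
  refine ⟨x, hxE, fun i j hxij => ?_⟩
  by_contra hij
  exact hx ⟨⟨i, j⟩, hij⟩ (sub_eq_zero.mpr hxij)

theorem stmt6_general {p : ℕ} (A : NonUnitalSubalgebra ℝ (Fin p → ℝ))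
    (h2 : ∀ i j : Fin p, i ≠ j → ∃ x ∈ A, x i ≠ x j) :
    ∃ x ∈ A, ∀ i j : Fin p, i ≠ j → x i ≠ x j := by
  obtain ⟨x, hxA, hx⟩ := A.toSubmodule.exists_injective_mem_of_separates h2
  exact ⟨x, hxA, fun _ _ => hx.ne⟩

/-- A subalgebra of `ℝ^p` containing the all-ones vector and separating coordinates
contains a vector with pairwise distinct coordinates. -/
theorem stmt6 {p : ℕ} (A : NonUnitalSubalgebra ℝ (Fin p → ℝ))
    (hone : (fun _ : Fin p => (1 : ℝ)) ∈ A)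
    (h2 : ∀ i j : Fin p, i ≠ j → ∃ x ∈ A, x i ≠ x j) :
    ∃ x ∈ A, ∀ i j : Fin p, i ≠ j → x i ≠ x j :=
  stmt6_general A h2
end

section
/- Let X be a set, G a finite group acting on X, p ≥ 1, and F a set of functions X → ℝ^p that is a linear subspace closed under coordinatewise multiplication (as functions). Then for any subgroup H ⊆ G and any x, y ∈ X: (for every f ∈ F there exists g ∈ H with f(g·x) = f(y)) if and only if (there exists g ∈ H such that for every f ∈ F, f(g·x) = f(y)). -/
/-!
For each `g ∈ H` the functions `f ∈ F` with `f (g • x) = f y` form a subspace of `F`, the kernel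
of `f ↦ f (g • x) - f y`. The left-hand side says that these finitely many subspaces cover `F`,
and a vector space over an infinite field is not a finite union of proper subspaces, so one of
them is all of `F`.
-/

theorem LinearMap.exists_eq_zero_of_forall_exists_apply_eq_zero {k E W ι : Type*}
    [DivisionRing k] [Infinite k] [AddCommGroup E] [Module k E] [AddCommGroup W] [Module k W]
    [Finite ι] (L : ι → E →ₗ[k] W) (h : ∀ v, ∃ i, L i v = 0) : ∃ i, L i = 0 := by
  have hcovers : ⋃ i, (ker (L i) : Set E) = Set.univ :=
    Set.eq_univ_of_forall fun v ↦ Set.mem_iUnion.mpr (h v)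
  obtain ⟨i, hi⟩ := Subspace.exists_eq_top_of_iUnion_eq_univ hcovers
  exact ⟨i, ker_eq_top.mp hi⟩

theorem Submodule.exists_forall_apply_eq_of_forall_exists {k X M ι : Type*}
    [DivisionRing k] [Infinite k] [AddCommGroup M] [Module k M] [Finite ι]
    (S : Submodule k (X → M)) (a b : ι → X) (h : ∀ f ∈ S, ∃ i, f (a i) = f (b i)) :
    ∃ i, ∀ f ∈ S, f (a i) = f (b i) := by
  let L : ι → S →ₗ[k] M := fun i ↦
    (LinearMap.proj (R := k) (φ := fun _ ↦ M) (a i) - LinearMap.proj (b i)) ∘ₗ S.subtype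
  obtain ⟨i, hi⟩ := LinearMap.exists_eq_zero_of_forall_exists_apply_eq_zero L fun f ↦ by
    simpa [L, sub_eq_zero] using h f f.2
  exact ⟨i, fun f hf ↦ sub_eq_zero.mp (LinearMap.congr_fun hi ⟨f, hf⟩)⟩

theorem stmt8_general {X G : Type*} [Group G] [Finite G] [MulAction G X]
    {p : ℕ}
    (F : NonUnitalSubalgebra ℝ (X → Fin p → ℝ))
    (H : Subgroup G) (x y : X) :
    (∀ f ∈ F, ∃ g ∈ H, f (g • x) = f y) ↔ (∃ g ∈ H, ∀ f ∈ F, f (g • x) = f y) := by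
  constructor
  · intro h
    obtain ⟨g, hg⟩ := F.toSubmodule.exists_forall_apply_eq_of_forall_exists
      (fun g : H ↦ (g : G) • x) (fun _ ↦ y) fun f hf ↦ by
        obtain ⟨g, hgH, hfg⟩ := h f hf
        exact ⟨⟨g, hgH⟩, hfg⟩
    exact ⟨g, g.2, hg⟩
  · rintro ⟨g, hgH, hg⟩ f hf
    exact ⟨g, hgH, hg f hf⟩

/-- Exchange of quantifiers for subalgebras of vector-valued functions under a finite
group action. -/
theorem stmt8 {X G : Type*} [Group G] [Finite G] [MulAction G X]
    {p : ℕ} (hp : 1 ≤ p)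
    (F : NonUnitalSubalgebra ℝ (X → Fin p → ℝ))
    (H : Subgroup G) (x y : X) :
    (∀ f ∈ F, ∃ g ∈ H, f (g • x) = f y) ↔ (∃ g ∈ H, ∀ f ∈ F, f (g • x) = f y) :=
  stmt8_general F H x y
end

section
/- Let X be a compact space, Y = ℝ^p, G a finite group acting continuously on X and acting on Y, and F a nonempty subalgebra of C(X,Y) consisting of equivariant functions and containing the constant function 1. Let F_scal = {f ∈ C(X,ℝ) : the function x ↦ (f(x),…,f(x)) belongs to F}, and let π : Y → Y/G be the quotient map. Assume sep(F_scal) ⊆ sep(π∘F). Then the uniform closure of F equals {f ∈ C_E(X,Y) : sep(F) ⊆ sep(f) and f(x) ∈ F(x) for all x ∈ X}, where F(x) = {f(x) : f ∈ F}. Moreover, with I(x) = {(i,j) : y_i = y_j for all y ∈ F(x)}, we have F(x) = {y ∈ ℝ^p : y_i = y_j for all (i,j) ∈ I(x)}. -/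
/-!
The closure of `F` lies in the right-hand side because each of the three conditions is closed;
for the last one, `F(x)` is a finite-dimensional subspace of `ℝ^p`. Conversely, a map
`X → ℝ^p` is a scalar map on the compact space `X × Fin p`, and Stone–Weierstrass on the
quotient of `X × Fin p` by the separation relation of `F` puts `f` in the closure of `F` as soon
as `f x i = f x' j` whenever every `h ∈ F` has `h x i = h x' j`. For such `x, x'` the scalar
elements of `F` do not separate them, so every `h ∈ F` sends `x` and `x'` to the same orbit:
`h (g • x) = h x'` for some `g`. Since `G` is finite and a real vector space is not a finite
union of proper subspaces, one `g` serves all `h ∈ F` at once. Then `f (g • x) = f x'`, and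
equivariance turns the element of `F` agreeing with `f` at `x` into one agreeing with `f` at
`x'` as well. The description of `F(x)` is the same Stone–Weierstrass argument on the finite
discrete space `Fin p`.
-/

open Topology

namespace ContinuousMap

theorem mem_subalgebra_topologicalClosure_of_forall_eq {Z : Type*} [TopologicalSpace Z]
    [CompactSpace Z] (A : Subalgebra ℝ C(Z, ℝ)) {f : C(Z, ℝ)}
    (hf : ∀ z z', (∀ a ∈ A, a z = a z') → f z = f z') : f ∈ A.topologicalClosure := by
  -- `Z` with the points that `A` does not separate identified
  let q : C(Z, Quotient (Setoid.ker fun z (a : A) ↦ (a : C(Z, ℝ)) z)) :=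
    ⟨Quotient.mk _, continuous_quotient_mk'⟩
  have hq : IsQuotientMap q := isQuotientMap_quotient_mk'
  have factors (k : C(Z, ℝ)) (hk : ∀ z z', (∀ a ∈ A, a z = a z') → k z = k z') :
      Function.FactorsThrough k q := fun z z' h ↦
    hk z z' fun a ha ↦ congrFun (Quotient.exact h) ⟨a, ha⟩
  let B := A.comap (compRightAlgHom ℝ ℝ q)
  have hB : B.SeparatesPoints := by
    rintro ⟨z⟩ ⟨z'⟩ hzz'
    obtain ⟨a, ha, haz⟩ : ∃ a ∈ A, a z ≠ a z' := by
      contrapose! hzz'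
      exact Quotient.sound (funext fun a ↦ hzz' a a.2)
    have ha' := factors a fun _ _ h ↦ h a ha
    have hlift := hq.lift_comp a ha'
    refine ⟨_, ⟨hq.lift a ha', ?_, rfl⟩, fun h ↦ haz ?_⟩
    · change (hq.lift a ha').comp q ∈ A
      rwa [hlift]
    · rw [← hlift]
      exact h
  have hfB : hq.lift f (factors f hf) ∈ B.topologicalClosure := by
    rw [subalgebra_topologicalClosure_eq_top_of_separatesPoints B hB]
    trivial
  rw [← SetLike.mem_coe, Subalgebra.topologicalClosure_coe, ← hq.lift_comp f (factors f hf)]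
  exact map_mem_closure (f := compRightAlgHom ℝ ℝ q) (compRightAlgHom_continuous ℝ ℝ q) hfB
    fun k hk ↦ hk

section UncurryPi

variable {X ι : Type*} [TopologicalSpace X] [TopologicalSpace ι] [DiscreteTopology ι]

def uncurryPi : C(X, ι → ℝ) →ₐ[ℝ] C(X × ι, ℝ) where
  toFun h := ⟨fun z ↦ h z.1 z.2,
    continuous_prod_of_discrete_right.mpr fun i ↦ (continuous_apply i).comp h.continuous⟩
  map_one' := rfl
  map_mul' _ _ := rfl
  map_zero' := rfl
  map_add' _ _ := rfl
  commutes' _ := rfl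

theorem isometry_uncurryPi [CompactSpace X] [Fintype ι] :
    Isometry (uncurryPi : C(X, ι → ℝ) → C(X × ι, ℝ)) := by
  refine Isometry.of_dist_eq fun f g ↦ le_antisymm ?_ ?_
  · exact (dist_le dist_nonneg).2 fun z ↦
      (dist_le_pi_dist (f z.1) (g z.1) z.2).trans (dist_apply_le_dist z.1)
  · exact (dist_le dist_nonneg).2 fun x ↦
      (dist_pi_le_iff dist_nonneg).2 fun i ↦
        dist_apply_le_dist (f := uncurryPi f) (g := uncurryPi g) (x, i)

theorem mem_subalgebra_topologicalClosure_of_forall_eq_pi [CompactSpace X] [Fintype ι]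
    (A : Subalgebra ℝ C(X, ι → ℝ)) {f : C(X, ι → ℝ)}
    (hf : ∀ x x' i j, (∀ a ∈ A, a x i = a x' j) → f x i = f x' j) :
    f ∈ A.topologicalClosure := by
  have hmem := mem_subalgebra_topologicalClosure_of_forall_eq (A.map uncurryPi)
    (f := uncurryPi f) fun ⟨x, i⟩ ⟨x', j⟩ h ↦ hf x x' i j fun a ha ↦ h _ ⟨a, ha, rfl⟩
  rw [← SetLike.mem_coe, Subalgebra.topologicalClosure_coe, Subalgebra.coe_map] at hmem
  have hΦ : IsInducing (uncurryPi : C(X, ι → ℝ) → C(X × ι, ℝ)) :=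
    (isometry_uncurryPi (X := X) (ι := ι)).isUniformInducing.isInducing
  rw [← SetLike.mem_coe, Subalgebra.topologicalClosure_coe, hΦ.closure_eq_preimage_closure_image]
  exact hmem

end UncurryPi

end ContinuousMap

theorem Subalgebra.mem_iff_forall_eq_imp_eq_pi {ι : Type*} [Finite ι]
    (S : Subalgebra ℝ (ι → ℝ)) (y : ι → ℝ) :
    y ∈ S ↔ ∀ i j, (∀ z ∈ S, z i = z j) → y i = y j := by
  refine ⟨fun hy i j h ↦ h y hy, fun hy ↦ ?_⟩
  let _ : TopologicalSpace ι := ⊥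
  have : DiscreteTopology ι := ⟨rfl⟩
  let S' := S.comap (ContinuousMap.coeFnAlgHom ℝ (α := ι) (A := ℝ))
  have hy' := ContinuousMap.mem_subalgebra_topologicalClosure_of_forall_eq S'
    (f := ⟨y, continuous_of_discreteTopology⟩) fun i j h ↦
      hy i j fun z hz ↦ h ⟨z, continuous_of_discreteTopology⟩ hz
  rw [← SetLike.mem_coe, Subalgebra.topologicalClosure_coe] at hy'
  have hS : IsClosed (S : Set (ι → ℝ)) := S.toSubmodule.closed_of_finiteDimensional
  rw [← SetLike.mem_coe, ← hS.closure_eq]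
  exact map_mem_closure ContinuousMap.homeoFnOfDiscrete.continuous hy' fun z hz ↦ hz

theorem LinearMap.exists_eq_zero_of_forall_exists_apply_eq_zero_s9 {ι K M N : Type*} [Finite ι]
    [Field K] [Infinite K] [AddCommGroup M] [Module K M] [AddCommGroup N] [Module K N]
    (f : ι → M →ₗ[K] N) (h : ∀ m, ∃ i, f i m = 0) : ∃ i, f i = 0 := by
  by_contra! hf
  obtain ⟨m, hm⟩ := Submodule.exists_forall_notMem_of_forall_ne_top (fun i ↦ ker (f i))
    fun i ↦ by simpa only [ne_eq, ker_eq_top] using hf i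
  obtain ⟨i, hi⟩ := h m
  exact hm i hi

namespace Submodule

variable {K X M : Type*} [Field K] [Infinite K] [TopologicalSpace X] [TopologicalSpace M]
  [AddCommGroup M] [IsTopologicalAddGroup M] [Module K M] [ContinuousConstSMul K M]

theorem exists_forall_apply_eq_of_forall_exists_s9 {ι : Type*} [Finite ι]
    (A : Submodule K C(X, M)) (y y' : ι → X) (h : ∀ a ∈ A, ∃ i, a (y i) = a (y' i)) :
    ∃ i, ∀ a ∈ A, a (y i) = a (y' i) := by
  let defect (i : ι) : A →ₗ[K] M :=
    (LinearMap.proj (R := K) (φ := fun _ : X ↦ M) (y i) - LinearMap.proj (y' i)) ∘ₗ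
      ContinuousMap.coeFnLinearMap K ∘ₗ A.subtype
  obtain ⟨i, hi⟩ := LinearMap.exists_eq_zero_of_forall_exists_apply_eq_zero_s9 defect
    fun ⟨a, ha⟩ ↦ (h a ha).imp fun _ ↦ sub_eq_zero.mpr
  exact ⟨i, fun a ha ↦ sub_eq_zero.mp (LinearMap.congr_fun hi ⟨a, ha⟩)⟩

variable {G : Type*} [Group G] [MulAction G X] [MulAction G M]

theorem exists_smul_forall_apply_eq_of_orbit_eq [Finite G] (A : Submodule K C(X, M))
    (hA : ∀ a ∈ A, ∀ g : G, ∀ x, a (g • x) = g • a x) {x x' : X}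
    (horbit : ∀ a ∈ A, MulAction.orbit G (a x) = MulAction.orbit G (a x')) :
    ∃ g : G, ∀ a ∈ A, a (g • x) = a x' := by
  refine A.exists_forall_apply_eq_of_forall_exists_s9 (fun g : G ↦ g • x) (fun _ ↦ x')
    fun a ha ↦ ?_
  obtain ⟨g, hg⟩ :=
    MulAction.mem_orbit_iff.mp ((horbit a ha).symm ▸ MulAction.mem_orbit_self (a x'))
  exact ⟨g, (hA a ha g x).trans hg⟩

theorem exists_mem_eq_pair_of_orbit_eq [Finite G] (A : Submodule K C(X, M))
    (hA : ∀ a ∈ A, ∀ g : G, ∀ x, a (g • x) = g • a x) {x x' : X}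
    (horbit : ∀ a ∈ A, MulAction.orbit G (a x) = MulAction.orbit G (a x')) {f : C(X, M)}
    (hfe : ∀ g : G, ∀ x, f (g • x) = g • f x)
    (hfs : ∀ x x', (∀ a ∈ A, a x = a x') → f x = f x') (hfx : ∃ a ∈ A, a x = f x) :
    ∃ a ∈ A, a x = f x ∧ a x' = f x' := by
  obtain ⟨g, hg⟩ := A.exists_smul_forall_apply_eq_of_orbit_eq hA horbit
  obtain ⟨a, ha, hax⟩ := hfx
  refine ⟨a, ha, hax, ?_⟩
  calc a x' = a (g • x) := (hg a ha).symm
    _ = g • f x := by rw [hA a ha, hax]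
    _ = f (g • x) := (hfe g x).symm
    _ = f x' := hfs _ _ hg

end Submodule

namespace ContinuousMap

variable {X Y : Type*} [TopologicalSpace X] [TopologicalSpace Y]

theorem isClosed_setOf_equivariant {G : Type*} [Group G] [MulAction G X] [MulAction G Y]
    [ContinuousConstSMul G Y] [T2Space Y] :
    IsClosed {f : C(X, Y) | ∀ g : G, ∀ x, f (g • x) = g • f x} := by
  simp only [Set.ofPred_forall]
  exact isClosed_iInter fun g ↦ isClosed_iInter fun x ↦ isClosed_eq (continuous_eval_const _)
    ((continuous_const_smul g).comp (continuous_eval_const x))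

theorem isClosed_setOf_forall_eq_of_rel [T2Space Y] (r : X → X → Prop) :
    IsClosed {f : C(X, Y) | ∀ x x', r x x' → f x = f x'} := by
  simp only [Set.ofPred_forall]
  exact isClosed_iInter fun x ↦ isClosed_iInter fun x' ↦ isClosed_iInter fun _ ↦
    isClosed_eq (continuous_eval_const x) (continuous_eval_const x')

theorem isClosed_setOf_forall_mem {S : X → Set Y} (hS : ∀ x, IsClosed (S x)) :
    IsClosed {f : C(X, Y) | ∀ x, f x ∈ S x} := by
  simp only [Set.ofPred_forall]
  exact isClosed_iInter fun x ↦ (hS x).preimage (continuous_eval_const x)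

end ContinuousMap

theorem stmt9_general {X G : Type*} [TopologicalSpace X] [CompactSpace X] [Group G] [Finite G]
    [MulAction G X] {p : ℕ}
    [MulAction G (Fin p → ℝ)] [ContinuousConstSMul G (Fin p → ℝ)]
    (F : Set C(X, Fin p → ℝ))
    (hadd : ∀ f ∈ F, ∀ g ∈ F, f + g ∈ F)
    (hsmul : ∀ c : ℝ, ∀ f ∈ F, c • f ∈ F)
    (hmul : ∀ f ∈ F, ∀ g ∈ F, f * g ∈ F)
    (hone : (1 : C(X, Fin p → ℝ)) ∈ F)
    (hequiv : ∀ f ∈ F, ∀ g : G, ∀ x : X, f (g • x) = g • f x)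
    (hscal : ∀ x x' : X,
      (∀ f : C(X, ℝ), (∃ k ∈ F, ∀ z : X, k z = fun _ => f z) → f x = f x') →
      ∀ f ∈ F, MulAction.orbit G (f x) = MulAction.orbit G (f x')) :
    closure F = {f : C(X, Fin p → ℝ) |
        (∀ g : G, ∀ x : X, f (g • x) = g • f x) ∧
        (∀ x x' : X, (∀ h ∈ F, h x = h x') → f x = f x') ∧
        (∀ x : X, f x ∈ {y : Fin p → ℝ | ∃ h ∈ F, h x = y})} ∧
    ∀ x : X, {y : Fin p → ℝ | ∃ h ∈ F, h x = y} =
      {y : Fin p → ℝ | ∀ i j : Fin p,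
        (∀ z : Fin p → ℝ, (∃ h ∈ F, h x = z) → z i = z j) → y i = y j} := by
  let A : Subalgebra ℝ C(X, Fin p → ℝ) := Submodule.toSubalgebra
    { carrier := F
      add_mem' := fun ha hb ↦ hadd _ ha _ hb
      zero_mem' := zero_smul ℝ (1 : C(X, Fin p → ℝ)) ▸ hsmul 0 1 hone
      smul_mem' := hsmul } hone fun a b ha hb ↦ hmul a ha b hb
  let values (x : X) := A.map (ContinuousMap.evalAlgHom ℝ (Fin p → ℝ) x)
  refine ⟨?_, fun x ↦ Set.ext fun y ↦ (values x).mem_iff_forall_eq_imp_eq_pi y⟩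
  refine (closure_minimal ?_ ?_).antisymm ?_
  · exact fun h hh ↦ ⟨hequiv h hh, fun _ _ hxx' ↦ hxx' h hh, fun x ↦ ⟨h, hh, rfl⟩⟩
  · exact ContinuousMap.isClosed_setOf_equivariant.inter
      ((ContinuousMap.isClosed_setOf_forall_eq_of_rel _).inter
        (ContinuousMap.isClosed_setOf_forall_mem fun x ↦
          (values x).toSubmodule.closed_of_finiteDimensional))
  rintro f ⟨hfe, hfs, hfv⟩
  change f ∈ closure (A : Set C(X, Fin p → ℝ))
  rw [← A.topologicalClosure_coe]
  refine ContinuousMap.mem_subalgebra_topologicalClosure_of_forall_eq_pi A fun x x' i j hxx' ↦ ?_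
  have horbit := hscal x x' fun k ⟨m, hm, hmk⟩ ↦ by simpa [hmk] using hxx' m hm
  obtain ⟨a, ha, hax, hax'⟩ :=
    A.toSubmodule.exists_mem_eq_pair_of_orbit_eq hequiv horbit hfe hfs (hfv x)
  rw [← hax, ← hax']
  exact hxx' a ha

/-- Equivariant Stone-Weierstrass theorem (main abstract version). -/
theorem stmt9 {X G : Type*} [TopologicalSpace X] [CompactSpace X] [Group G] [Finite G]
    [MulAction G X] [ContinuousConstSMul G X] {p : ℕ}
    [MulAction G (Fin p → ℝ)] [ContinuousConstSMul G (Fin p → ℝ)]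
    (F : Set C(X, Fin p → ℝ)) (hne : F.Nonempty)
    (hadd : ∀ f ∈ F, ∀ g ∈ F, f + g ∈ F)
    (hsmul : ∀ c : ℝ, ∀ f ∈ F, c • f ∈ F)
    (hmul : ∀ f ∈ F, ∀ g ∈ F, f * g ∈ F)
    (hone : (1 : C(X, Fin p → ℝ)) ∈ F)
    (hequiv : ∀ f ∈ F, ∀ g : G, ∀ x : X, f (g • x) = g • f x)
    (hscal : ∀ x x' : X,
      (∀ f : C(X, ℝ), (∃ k ∈ F, ∀ z : X, k z = fun _ => f z) → f x = f x') →
      ∀ f ∈ F, MulAction.orbit G (f x) = MulAction.orbit G (f x')) :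
    closure F = {f : C(X, Fin p → ℝ) |
        (∀ g : G, ∀ x : X, f (g • x) = g • f x) ∧
        (∀ x x' : X, (∀ h ∈ F, h x = h x') → f x = f x') ∧
        (∀ x : X, f x ∈ {y : Fin p → ℝ | ∃ h ∈ F, h x = y})} ∧
    ∀ x : X, {y : Fin p → ℝ | ∃ h ∈ F, h x = y} =
      {y : Fin p → ℝ | ∀ i j : Fin p,
        (∀ z : Fin p → ℝ, (∃ h ∈ F, h x = z) → z i = z j) → y i = y j} :=
  stmt9_general F hadd hsmul hmul hone hequiv hscal
end

section
/- Let X be a compact space, Y = ℝ^p, G a finite group acting continuously on X, and F ⊆ C_I(X,Y) a nonempty set of G-invariant continuous functions. Assume that for every continuous h : ℝ^p × ℝ^p → ℝ^p and f, g ∈ F, the function x ↦ h(f(x), g(x)) belongs to F. Then the uniform closure of F equals {f ∈ C_I(X,Y) : sep(F) ⊆ sep(f)}. -/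
/-!
Uniform limits of functions in `F` are `G`-invariant and identify every pair of points that `F`
identifies, since both are closed conditions. Conversely, closure of `F` under post-composition
makes it a lattice for the coordinatewise order, and lets it interpolate such an `f` at any two
points: by a constant if `F` does not separate them, and otherwise by an affine function of a
coordinate in which some member of `F` separates them. The lattice form of the Stone–Weierstrass
argument (a finite infimum of finite suprema of interpolants, chosen by compactness) then
approximates `f` uniformly.
-/

open Topology

instance Pi.continuousInf {ι : Type*} {π : ι → Type*} [∀ i, TopologicalSpace (π i)]
    [∀ i, Min (π i)] [∀ i, ContinuousInf (π i)] : ContinuousInf (∀ i, π i) where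
  continuous_inf := continuous_pi fun i =>
    ((continuous_apply i).comp continuous_fst).inf ((continuous_apply i).comp continuous_snd)

instance Pi.continuousSup {ι : Type*} {π : ι → Type*} [∀ i, TopologicalSpace (π i)]
    [∀ i, Max (π i)] [∀ i, ContinuousSup (π i)] : ContinuousSup (∀ i, π i) where
  continuous_sup := continuous_pi fun i =>
    ((continuous_apply i).comp continuous_fst).sup ((continuous_apply i).comp continuous_snd)

theorem ContinuousMap.apply_eq_of_mem_closure {X Y : Type*} [TopologicalSpace X]
    [TopologicalSpace Y] [T2Space Y] {F : Set C(X, Y)} {a b : X} (h : ∀ k ∈ F, k a = k b)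
    {f : C(X, Y)} (hf : f ∈ closure F) : f a = f b :=
  closure_minimal h (isClosed_eq (continuous_eval_const a) (continuous_eval_const b)) hf

theorem ContinuousMap.exists_apply_eq_apply_eq {E : Type*} [AddCommGroup E] [Module ℝ E]
    [TopologicalSpace E] [ContinuousAdd E] [ContinuousSMul ℝ E] {a b : ℝ} (hab : a ≠ b)
    (c d : E) : ∃ φ : C(ℝ, E), φ a = c ∧ φ b = d :=
  ⟨⟨fun t => c + ((t - a) / (b - a)) • (d - c), by fun_prop⟩, by simp,
    by simp [div_self (sub_ne_zero.2 hab.symm)]⟩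

section LatticeApproximation

variable {X ι : Type*} [TopologicalSpace X] [CompactSpace X] [Finite ι]

theorem exists_finset_forall_sub_lt [Nonempty X] {f : C(X, ι → ℝ)} (g : X → C(X, ι → ℝ))
    (hg : ∀ y, g y y = f y) {ε : ℝ} (hε : 0 < ε) :
    ∃ s : Finset X, s.Nonempty ∧ ∀ z, ∃ y ∈ s, ∀ i, f z i - ε < g y z i := by
  let U : X → Set X := fun y => {z | ∀ i, f z i - ε < g y z i}
  have hU : ∀ y, U y ∈ 𝓝 y := by
    refine fun y => IsOpen.mem_nhds ?_ fun i => by simp [hg, hε]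
    simp only [U, Set.ofPred_forall]
    exact isOpen_iInter_of_finite fun i => isOpen_lt (by fun_prop) (by fun_prop)
  obtain ⟨s, hs⟩ := CompactSpace.elim_nhds_subcover U hU
  exact ⟨s, Finset.coe_nonempty.1 (Set.nonempty_of_union_eq_top_of_nonempty _ _ ‹_› hs),
    Set.exists_set_mem_of_union_eq_top _ _ hs⟩

theorem exists_finset_forall_lt_add [Nonempty X] {f : C(X, ι → ℝ)} (g : X → C(X, ι → ℝ))
    (hg : ∀ y, g y y = f y) {ε : ℝ} (hε : 0 < ε) :
    ∃ s : Finset X, s.Nonempty ∧ ∀ z, ∃ y ∈ s, ∀ i, g y z i < f z i + ε := by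
  obtain ⟨s, hs, hcover⟩ := exists_finset_forall_sub_lt (f := -f) (fun y => -g y)
    (fun y => by simp [hg]) hε
  refine ⟨s, hs, fun z => ?_⟩
  obtain ⟨y, hy, hlt⟩ := hcover z
  exact ⟨y, hy, fun i => by simpa [neg_sub_left, add_comm] using hlt i⟩

variable {L : Set C(X, ι → ℝ)} {f : C(X, ι → ℝ)}

theorem exists_mem_apply_eq_forall_sub_lt (sup_mem : ∀ g ∈ L, ∀ h ∈ L, g ⊔ h ∈ L)
    (hf : ∀ x y, ∃ g ∈ L, g x = f x ∧ g y = f y) (x : X) {ε : ℝ} (hε : 0 < ε) :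
    ∃ h ∈ L, h x = f x ∧ ∀ z i, f z i - ε < h z i := by
  have : Nonempty X := ⟨x⟩
  choose g hgL hgx hgy using hf x
  obtain ⟨s, hs, hcover⟩ := exists_finset_forall_sub_lt g hgy hε
  refine ⟨s.sup' hs g, Finset.sup'_mem L sup_mem s hs g fun y _ => hgL y, ?_, fun z i => ?_⟩
  · simp [ContinuousMap.sup'_apply, hgx]
  · obtain ⟨y, hy, hlt⟩ := hcover z
    simp only [ContinuousMap.sup'_apply, Finset.sup'_apply, Finset.lt_sup'_iff]
    exact ⟨y, hy, hlt i⟩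

theorem mem_closure_of_forall_exists_mem_apply_eq (hL : L.Nonempty)
    (inf_mem : ∀ g ∈ L, ∀ h ∈ L, g ⊓ h ∈ L) (sup_mem : ∀ g ∈ L, ∀ h ∈ L, g ⊔ h ∈ L)
    (hf : ∀ x y, ∃ g ∈ L, g x = f x ∧ g y = f y) : f ∈ closure L := by
  cases nonempty_fintype ι
  refine Metric.mem_closure_iff.2 fun ε hε => ?_
  rcases isEmpty_or_nonempty X with hX | hX
  · obtain ⟨g, hg⟩ := hL
    exact ⟨g, hg, (ContinuousMap.dist_lt_iff hε).2 isEmptyElim⟩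
  choose h hhL hhx hlower using
    fun x => exists_mem_apply_eq_forall_sub_lt sup_mem hf x hε
  obtain ⟨t, ht, hcover⟩ := exists_finset_forall_lt_add h hhx hε
  refine ⟨t.inf' ht h, Finset.inf'_mem L inf_mem t ht h fun x _ => hhL x, ?_⟩
  refine (ContinuousMap.dist_lt_iff hε).2 fun z => (dist_pi_lt_iff hε).2 fun i => ?_
  have upper : (t.inf' ht h) z i < f z i + ε := by
    obtain ⟨x, hx, hlt⟩ := hcover z
    simp only [ContinuousMap.inf'_apply, Finset.inf'_apply, Finset.inf'_lt_iff]
    exact ⟨x, hx, hlt i⟩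
  have lower : f z i - ε < (t.inf' ht h) z i := by
    simp only [ContinuousMap.inf'_apply, Finset.inf'_apply, Finset.lt_inf'_iff]
    exact fun x _ => hlower x z i
  rw [Real.dist_eq, abs_sub_lt_iff]
  constructor <;> linarith

end LatticeApproximation

def IsClosedUnderPostcomp {X E : Type*} [TopologicalSpace X] [TopologicalSpace E]
    (F : Set C(X, E)) : Prop :=
  ∀ h : C(E × E, E), ∀ f ∈ F, ∀ g ∈ F, ∀ k : C(X, E),
    (∀ x : X, k x = h (f x, g x)) → k ∈ F

namespace IsClosedUnderPostcomp

variable {X E : Type*} [TopologicalSpace X] [TopologicalSpace E] {F : Set C(X, E)}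
  {f g : C(X, E)}

theorem comp_mem (hF : IsClosedUnderPostcomp F) (φ : C(E, E)) (hf : f ∈ F) : φ.comp f ∈ F :=
  hF (φ.comp .fst) f hf f hf _ fun _ => rfl

theorem const_mem (hF : IsClosedUnderPostcomp F) (hne : F.Nonempty) (c : E) :
    ContinuousMap.const X c ∈ F :=
  hne.elim fun _ hf => hF.comp_mem (.const E c) hf

theorem inf_mem [SemilatticeInf E] [ContinuousInf E] (hF : IsClosedUnderPostcomp F)
    (hf : f ∈ F) (hg : g ∈ F) : f ⊓ g ∈ F :=
  hF ⟨fun q => q.1 ⊓ q.2, continuous_inf⟩ f hf g hg _ fun _ => rfl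

theorem sup_mem [SemilatticeSup E] [ContinuousSup E] (hF : IsClosedUnderPostcomp F)
    (hf : f ∈ F) (hg : g ∈ F) : f ⊔ g ∈ F :=
  hF ⟨fun q => q.1 ⊔ q.2, continuous_sup⟩ f hf g hg _ fun _ => rfl

variable {ι : Type*} {F : Set C(X, ι → ℝ)} {f h : C(X, ι → ℝ)}

theorem exists_mem_apply_eq_apply_eq (hF : IsClosedUnderPostcomp F) (hh : h ∈ F) {x x' : X}
    (hxx' : h x ≠ h x') (c c' : ι → ℝ) : ∃ g ∈ F, g x = c ∧ g x' = c' := by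
  obtain ⟨i, hi⟩ := Function.ne_iff.1 hxx'
  obtain ⟨φ, hφ, hφ'⟩ := ContinuousMap.exists_apply_eq_apply_eq hi c c'
  let π : C(ι → ℝ, ℝ) := ⟨fun v => v i, continuous_apply i⟩
  exact ⟨(φ.comp π).comp h, hF.comp_mem _ hh, hφ, hφ'⟩

theorem exists_mem_apply_eq_of_separates (hF : IsClosedUnderPostcomp F) (hne : F.Nonempty)
    (hf : ∀ x x', (∀ h ∈ F, h x = h x') → f x = f x') (x x' : X) :
    ∃ g ∈ F, g x = f x ∧ g x' = f x' := by
  by_cases hsep : ∀ h ∈ F, h x = h x'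
  · exact ⟨.const X (f x), hF.const_mem hne _, rfl, hf x x' hsep⟩
  · push Not at hsep
    obtain ⟨h, hh, hxx'⟩ := hsep
    exact hF.exists_mem_apply_eq_apply_eq hh hxx' _ _

end IsClosedUnderPostcomp

theorem stmt11_general {X G : Type*} [TopologicalSpace X] [CompactSpace X] [Group G]
    [MulAction G X] {p : ℕ}
    (F : Set C(X, Fin p → ℝ)) (hne : F.Nonempty)
    (hinv : ∀ f ∈ F, ∀ g : G, ∀ x : X, f (g • x) = f x)
    (hpost : ∀ h : C((Fin p → ℝ) × (Fin p → ℝ), Fin p → ℝ), ∀ f ∈ F, ∀ g ∈ F,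
      ∀ k : C(X, Fin p → ℝ), (∀ x : X, k x = h (f x, g x)) → k ∈ F) :
    closure F = {f : C(X, Fin p → ℝ) |
        (∀ g : G, ∀ x : X, f (g • x) = f x) ∧
        ∀ x x' : X, (∀ h ∈ F, h x = h x') → f x = f x'} := by
  have hF : IsClosedUnderPostcomp F := hpost
  refine Set.Subset.antisymm (fun f hf => ⟨fun g x => ?_, fun x x' hxx' => ?_⟩) fun f hf => ?_
  · exact ContinuousMap.apply_eq_of_mem_closure (fun k hk => hinv k hk g x) hf
  · exact ContinuousMap.apply_eq_of_mem_closure hxx' hf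
  · exact mem_closure_of_forall_exists_mem_apply_eq hne (fun _ hg _ hh => hF.inf_mem hg hh)
      (fun _ hg _ hh => hF.sup_mem hg hh) (hF.exists_mem_apply_eq_of_separates hne hf.2)

/-- Invariant Stone-Weierstrass theorem for post-composition-closed classes. -/
theorem stmt11 {X G : Type*} [TopologicalSpace X] [CompactSpace X] [Group G] [Finite G]
    [MulAction G X] [ContinuousConstSMul G X] {p : ℕ}
    (F : Set C(X, Fin p → ℝ)) (hne : F.Nonempty)
    (hinv : ∀ f ∈ F, ∀ g : G, ∀ x : X, f (g • x) = f x)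
    (hpost : ∀ h : C((Fin p → ℝ) × (Fin p → ℝ), Fin p → ℝ), ∀ f ∈ F, ∀ g ∈ F,
      ∀ k : C(X, Fin p → ℝ), (∀ x : X, k x = h (f x, g x)) → k ∈ F) :
    closure F = {f : C(X, Fin p → ℝ) |
        (∀ g : G, ∀ x : X, f (g • x) = f x) ∧
        ∀ x x' : X, (∀ h ∈ F, h x = h x') → f x = f x'} :=
  stmt11_general F hne hinv hpost
end

section
/- Let X be a compact space, 𝔽 = ℝ^p, Y = 𝔽^n, and G = S_n the symmetric group acting continuously on X and on 𝔽^n by permuting the n blocks. Let F ⊆ C_E(X, 𝔽^n) be nonempty and satisfy: (1) for every continuous h : 𝔽 × 𝔽 → 𝔽 and f, g ∈ F, the function x ↦ (h(f(x)_1, g(x)_1), …, h(f(x)_n, g(x)_n)) is in F; (2) for every f ∈ F, the function x ↦ (Σᵢ f(x)_i, …, Σᵢ f(x)_i) is in F. Then the uniform closure of F equals {f ∈ C_E(X, 𝔽^n) : sep(F) ⊆ sep(f)}. -/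
/-!
Since `F` is closed under blockwise `max` and `min`, a lattice (Kakutani–Krein) form of the
Stone–Weierstrass theorem reduces the claim to interpolating an equivariant `f` with
`sep(F) ⊆ sep(f)` by an element of `F` at two points. Composing with continuous maps that are injective on finitely many values
yields one `g₀ ∈ F` whose blocks at finitely many given points coincide exactly when those of
every member of `F` do. If all of `F` agrees on block `a` at `y` and block `b` at `y'`, pooling
indicators of the values of `g₀` shows that `g₀ y` and `g₀ y'` have the same blocks with
multiplicity; the matching permutation `σ` gives `g y = g (σ⁻¹ • y')` for all `g ∈ F` by
equivariance, so `f` agrees there as well. Thus `f` factors through `g₀` on these blocks, and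
`g₀` composed with an interpolating continuous map is the required element of `F`.
-/

open Function Set

universe u v

theorem ContinuousMap.exists_forall_apply_eq_of_finite {E : Type u} {Y : Type v}
    [TopologicalSpace E] [NormalSpace E] [T1Space E] [TopologicalSpace Y]
    [TietzeExtension.{u} Y] {s : Set E} (hs : s.Finite) (w : s → Y) :
    ∃ θ : C(E, Y), ∀ z : s, θ z = w z := by
  have : Finite s := hs
  obtain ⟨θ, hθ⟩ := exists_restrict_eq hs.isClosed ⟨w, continuous_of_discreteTopology⟩
  exact ⟨θ, fun z => DFunLike.congr_fun hθ z⟩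

theorem ContinuousMap.exists_injOn_of_finite {E : Type u} {Y : Type v}
    [TopologicalSpace E] [NormalSpace E] [T1Space E] [TopologicalSpace Y]
    [TietzeExtension.{u} Y] [Infinite Y] {s : Set E} (hs : s.Finite) :
    ∃ θ : C(E, Y), InjOn θ s := by
  have : Finite s := hs
  obtain ⟨θ, hθ⟩ := exists_forall_apply_eq_of_finite hs
    (Infinite.natEmbedding Y ∘ Fin.val ∘ Finite.equivFin s)
  have hinj : Injective (Infinite.natEmbedding Y ∘ Fin.val ∘ Finite.equivFin s) :=
    (Infinite.natEmbedding Y).injective.comp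
      (Fin.val_injective.comp (Finite.equivFin s).injective)
  refine ⟨θ, fun z hz z' hz' h => ?_⟩
  simpa using hinj (a₁ := ⟨z, hz⟩) (a₂ := ⟨z', hz'⟩) (by rw [← hθ, ← hθ]; exact h)

theorem Equiv.Perm.exists_apply_eq_and_comp_eq_of_card_fiber_eq {ι α : Type*} [Finite ι]
    {u v : ι → α} (h : ∀ c, Nat.card {i // u i = c} = Nat.card {i // v i = c})
    {a b : ι} (hab : u a = v b) : ∃ σ : Equiv.Perm ι, σ a = b ∧ ∀ i, u i = v (σ i) := by
  classical
  let σ₀ : Equiv.Perm ι := Equiv.ofFiberEquiv fun c => (Finite.card_eq.1 (h c)).some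
  have hσ₀ : ∀ i, v (σ₀ i) = u i := Equiv.ofFiberEquiv_map _
  refine ⟨Equiv.swap (σ₀ a) b * σ₀, Equiv.swap_apply_left _ _, fun i => ?_⟩
  rw [Equiv.Perm.mul_apply, Equiv.apply_swap_eq_self ((hσ₀ a).trans hab), hσ₀]

theorem exists_finest_mem_of_refine {S α : Type*} [Finite S] {G : Set (S → α)}
    (hne : G.Nonempty)
    (hrefine : ∀ a ∈ G, ∀ b ∈ G, ∃ c ∈ G, ∀ s t, c s = c t → a s = a t ∧ b s = b t) :
    ∃ c ∈ G, ∀ s t, c s = c t → ∀ a ∈ G, a s = a t := by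
  classical
  have : Fintype S := Fintype.ofFinite S
  suffices H : ∀ Q : Finset (S × S),
      ∃ c ∈ G, ∀ st ∈ Q, c st.1 = c st.2 → ∀ a ∈ G, a st.1 = a st.2 by
    obtain ⟨c, hc, hQ⟩ := H Finset.univ
    exact ⟨c, hc, fun s t => hQ (s, t) (Finset.mem_univ _)⟩
  intro Q
  induction Q using Finset.induction_on with
  | empty => exact ⟨hne.some, hne.some_mem, by simp⟩
  | insert st Q _ ih =>
    obtain ⟨c, hc, hcQ⟩ := ih
    by_cases hst : ∀ a ∈ G, a st.1 = a st.2
    · exact ⟨c, hc, Finset.forall_mem_insert _ _ _ |>.2 ⟨fun _ => hst, hcQ⟩⟩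
    push Not at hst
    obtain ⟨a, ha, hast⟩ := hst
    obtain ⟨d, hd, hdca⟩ := hrefine c hc a ha
    refine ⟨d, hd, Finset.forall_mem_insert _ _ _ |>.2 ⟨fun h => absurd (hdca _ _ h).2 hast,
      fun st' hst' h => hcQ st' hst' (hdca _ _ h).1⟩⟩

namespace ContinuousMap
variable {X : Type*} [TopologicalSpace X]

theorem mem_closure_of_isSublattice [CompactSpace X] {L : Set C(X, ℝ)} (hL : IsSublattice L)
    (hne : L.Nonempty) {f : C(X, ℝ)} (hf : ∀ x x', ∃ g ∈ L, g x = f x ∧ g x' = f x') :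
    f ∈ closure L := by
  rcases isEmpty_or_nonempty X with hX | hX
  · simpa [Subsingleton.elim f hne.some] using subset_closure hne.some_mem
  refine Metric.mem_closure_iff.2 fun ε hε => ?_
  choose g hgL hgx hgx' using hf
  have hlow : ∀ x, ∃ h ∈ L, (∀ z, f z - ε < h z) ∧ h x = f x := by
    intro x
    let U x' : Set X := {z | f z - ε < g x x' z}
    have hU : ∀ x', U x' ∈ nhds x' := fun x' =>
      (isOpen_lt (by fun_prop) (by fun_prop)).mem_nhds (by simp [hgx', hε])
    obtain ⟨t, ht⟩ := CompactSpace.elim_nhds_subcover U hU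
    have htne : t.Nonempty := nonempty_of_union_eq_top_of_nonempty _ _ hX ht
    refine ⟨t.sup' htne (g x), Finset.sup'_mem _ (fun _ h _ h' => hL.supClosed h h') _ _ _
      fun x' _ => hgL x x', fun z => ?_, by simp [hgx]⟩
    obtain ⟨x', hx't, hz⟩ := exists_set_mem_of_union_eq_top _ _ ht z
    simpa [Finset.lt_sup'_iff] using ⟨x', hx't, hz⟩
  choose h hhL hlt hhx using hlow
  let W x : Set X := {z | h x z < f z + ε}
  have hW : ∀ x, W x ∈ nhds x := fun x =>
    (isOpen_lt (by fun_prop) (by fun_prop)).mem_nhds (by simp [hhx, hε])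
  obtain ⟨t, ht⟩ := CompactSpace.elim_nhds_subcover W hW
  have htne : t.Nonempty := nonempty_of_union_eq_top_of_nonempty _ _ hX ht
  refine ⟨t.inf' htne h, Finset.inf'_mem _ (fun _ h _ h' => hL.infClosed h h') _ _ _
    fun x _ => hhL x, (dist_lt_iff hε).2 fun z => ?_⟩
  rw [dist_comm, Real.dist_eq, abs_sub_lt_iff, sub_lt_iff_lt_add', sub_lt_comm]
  obtain ⟨x, hxt, hz⟩ := exists_set_mem_of_union_eq_top _ _ ht z
  constructor
  · simpa [Finset.inf'_lt_iff] using ⟨x, hxt, hz⟩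
  · simpa [Finset.lt_inf'_iff] using fun x _ => hlt x z

variable {ι E : Type*} [TopologicalSpace ι] [DiscreteTopology ι] [PseudoMetricSpace E]

def piUncurry (g : C(X, ι → E)) : C(ι × X, E) :=
  ⟨fun z => g z.2 z.1,
    continuous_prod_of_discrete_left.2 fun i => (continuous_apply i).comp g.continuous⟩

@[simp] lemma piUncurry_apply (g : C(X, ι → E)) (z : ι × X) : piUncurry g z = g z.2 z.1 :=
  rfl

lemma isometry_piUncurry [CompactSpace X] [Fintype ι] :
    Isometry (piUncurry : C(X, ι → E) → C(ι × X, E)) :=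
  Isometry.of_dist_eq fun g h => le_antisymm
    ((dist_le dist_nonneg).2 fun z =>
      (dist_le_pi_dist (g z.2) (h z.2) z.1).trans (dist_apply_le_dist z.2))
    ((dist_le dist_nonneg).2 fun x => (dist_pi_le_iff dist_nonneg).2 fun i =>
      dist_apply_le_dist (f := piUncurry g) (g := piUncurry h) (i, x))

lemma mem_closure_of_piUncurry_mem_closure [CompactSpace X] [Fintype ι] {L : Set C(X, ι → E)}
    {f : C(X, ι → E)} (hf : piUncurry f ∈ closure (piUncurry '' L)) : f ∈ closure L := by
  have hind := (isometry_piUncurry (X := X) (ι := ι) (E := E)).isUniformInducing.isInducing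
  rwa [hind.closure_eq_preimage_closure_image]

lemma exists_mem_image_piUncurry_eq_eq {L : Set C(X, ι → E)} {f : C(X, ι → E)}
    (hf : ∀ x x', ∃ g ∈ L, g x = f x ∧ g x' = f x') (z z' : ι × X) :
    ∃ g ∈ piUncurry '' L, g z = piUncurry f z ∧ g z' = piUncurry f z' := by
  obtain ⟨g, hg, hgx, hgx'⟩ := hf z.2 z'.2
  exact ⟨piUncurry g, mem_image_of_mem _ hg, by simp [hgx, hgx']⟩

end ContinuousMap

section Blocks

variable {X : Type*} [TopologicalSpace X] {ι : Type*} {V : Type*} [NormedAddCommGroup V]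

namespace ContinuousMap

def blockwise (θ : C(V × V, V)) (f g : C(X, ι → V)) : C(X, ι → V) :=
  ⟨fun x i => θ (f x i, g x i), by fun_prop⟩

@[simp] lemma blockwise_apply (θ : C(V × V, V)) (f g : C(X, ι → V)) (x : X) (i : ι) :
    blockwise θ f g x i = θ (f x i, g x i) :=
  rfl

variable [Fintype ι]

def blockSum (f : C(X, ι → V)) : C(X, ι → V) :=
  ⟨fun x _ => ∑ j, f x j, by fun_prop⟩

@[simp] lemma blockSum_apply (f : C(X, ι → V)) (x : X) (i : ι) :
    blockSum f x i = ∑ j, f x j :=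
  rfl

end ContinuousMap

open ContinuousMap

variable [Fintype ι]

structure IsBlockClosed (F : Set C(X, ι → V)) : Prop where
  blockwise_mem : ∀ θ : C(V × V, V), ∀ f ∈ F, ∀ g ∈ F, blockwise θ f g ∈ F
  blockSum_mem : ∀ f ∈ F, blockSum f ∈ F

theorem IsBlockClosed.mem_closure [CompactSpace X] [TopologicalSpace ι] [DiscreteTopology ι]
    {κ : Type*} [Fintype κ] [TopologicalSpace κ] [DiscreteTopology κ] {F : Set C(X, ι → κ → ℝ)}
    (hF : IsBlockClosed F) (hne : F.Nonempty) {f : C(X, ι → κ → ℝ)}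
    (hf : ∀ x x', ∃ g ∈ F, g x = f x ∧ g x' = f x') : f ∈ closure F := by
  refine mem_closure_of_piUncurry_mem_closure (mem_closure_of_piUncurry_mem_closure ?_)
  refine mem_closure_of_isSublattice ⟨?_, ?_⟩ ((hne.image _).image _)
    (exists_mem_image_piUncurry_eq_eq (exists_mem_image_piUncurry_eq_eq hf))
  · rintro _ ⟨_, ⟨g, hg, rfl⟩, rfl⟩ _ ⟨_, ⟨g', hg', rfl⟩, rfl⟩
    exact ⟨_, ⟨_, hF.blockwise_mem ⟨fun u c => max (u.1 c) (u.2 c), by fun_prop⟩ g hg g' hg',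
      rfl⟩, rfl⟩
  · rintro _ ⟨_, ⟨g, hg, rfl⟩, rfl⟩ _ ⟨_, ⟨g', hg', rfl⟩, rfl⟩
    exact ⟨_, ⟨_, hF.blockwise_mem ⟨fun u c => min (u.1 c) (u.2 c), by fun_prop⟩ g hg g' hg',
      rfl⟩, rfl⟩

def IsBlockEquivariant [MulAction (Equiv.Perm ι) X] (f : C(X, ι → V)) : Prop :=
  ∀ (σ : Equiv.Perm ι) (x : X) (i : ι), f (σ • x) i = f x (σ⁻¹ i)

namespace IsBlockClosed

variable [NormedSpace ℝ V] {F : Set C(X, ι → V)} (hF : IsBlockClosed F)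
include hF

theorem exists_perm_apply_eq [FiniteDimensional ℝ V] [Nontrivial V]
    {g : C(X, ι → V)} (hg : g ∈ F) {y y' : X} {a b : ι} (h : ∀ k ∈ F, k y a = k y' b) :
    ∃ σ : Equiv.Perm ι, σ a = b ∧ ∀ l, g y l = g y' (σ l) := by
  classical
  refine Equiv.Perm.exists_apply_eq_and_comp_eq_of_card_fiber_eq (fun c => ?_) (h g hg)
  obtain ⟨e, he⟩ := exists_ne (0 : V)
  -- pooling `φ ∘ g` with `φ` the indicator of `c` counts the blocks of `g` equal to `c`
  obtain ⟨φ, hφ⟩ := exists_forall_apply_eq_of_finite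
    ((finite_range (g y)).union (finite_range (g y'))) fun v => if (v : V) = c then e else 0
  have hcount : ∀ z ∈ ({y, y'} : Set X), ∑ l, φ (g z l) = Nat.card {l // g z l = c} • e := by
    intro z hz
    have hmem : ∀ l, g z l ∈ range (g y) ∪ range (g y') := fun l => by
      rcases hz with rfl | rfl
      exacts [.inl (mem_range_self l), .inr (mem_range_self l)]
    simp [fun l => hφ ⟨g z l, hmem l⟩, Finset.sum_ite, Nat.card_eq_fintype_card,
      Fintype.card_subtype]
  have hpool := h _ (hF.blockSum_mem _ (hF.blockwise_mem (φ.comp .fst) g hg g hg))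
  change ∑ l, φ (g y l) = ∑ l, φ (g y' l) at hpool
  rw [hcount y (by simp), hcount y' (by simp), ← Nat.cast_smul_eq_nsmul ℝ,
    ← Nat.cast_smul_eq_nsmul ℝ] at hpool
  exact_mod_cast smul_left_injective ℝ he hpool

theorem exists_mem_refine [FiniteDimensional ℝ V] [Nontrivial V] (P : Finset X)
    {g g' : C(X, ι → V)} (hg : g ∈ F) (hg' : g' ∈ F) :
    ∃ k ∈ F, ∀ z ∈ P, ∀ z' ∈ P, ∀ i j, k z i = k z' j → g z i = g z' j ∧ g' z i = g' z' j := by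
  have := Module.Free.infinite ℝ V
  obtain ⟨θ, hθ⟩ := exists_injOn_of_finite (Y := V)
    (finite_range fun s : P × ι => (g s.1 s.2, g' s.1 s.2))
  refine ⟨blockwise θ g g', hF.blockwise_mem θ g hg g' hg', fun z hz z' hz' i j h => ?_⟩
  simpa using hθ ⟨(⟨z, hz⟩, i), rfl⟩ ⟨(⟨z', hz'⟩, j), rfl⟩ h

theorem exists_mem_finest [FiniteDimensional ℝ V] [Nontrivial V] (hne : F.Nonempty)
    (P : Finset X) :
    ∃ g₀ ∈ F, ∀ z ∈ P, ∀ z' ∈ P, ∀ i j, g₀ z i = g₀ z' j → ∀ g ∈ F, g z i = g z' j := by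
  let ev (g : C(X, ι → V)) (s : P × ι) : V := g s.1 s.2
  obtain ⟨_, ⟨g₀, hg₀, rfl⟩, hfin⟩ := exists_finest_mem_of_refine (hne.image ev) (by
    rintro _ ⟨g, hg, rfl⟩ _ ⟨g', hg', rfl⟩
    obtain ⟨k, hk, hkgg'⟩ := hF.exists_mem_refine P hg hg'
    exact ⟨ev k, mem_image_of_mem ev hk, fun s t => hkgg' _ s.1.2 _ t.1.2 _ _⟩)
  exact ⟨g₀, hg₀, fun z hz z' hz' i j h g hg =>
    hfin (⟨z, hz⟩, i) (⟨z', hz'⟩, j) h _ (mem_image_of_mem ev hg)⟩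

variable [MulAction (Equiv.Perm ι) X] [FiniteDimensional ℝ V] [Nontrivial V] (hne : F.Nonempty)
  (hFe : ∀ g ∈ F, IsBlockEquivariant g) {f : C(X, ι → V)} (hfe : IsBlockEquivariant f)
  (hfs : ∀ x x', (∀ g ∈ F, g x = g x') → f x = f x')
include hne hFe hfe hfs

theorem apply_eq_of_forall_mem_apply_eq {y y' : X} {a b : ι}
    (h : ∀ g ∈ F, g y a = g y' b) : f y a = f y' b := by
  classical
  obtain ⟨g₀, hg₀, hfin⟩ := hF.exists_mem_finest hne {y, y'}
  obtain ⟨σ, hσa, hσ⟩ := hF.exists_perm_apply_eq hg₀ h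
  -- `g₀` is finest on `{y, y'}`, so every `g ∈ F` matches its blocks under `σ` as `g₀` does
  have hyσ : ∀ g ∈ F, g y = g (σ⁻¹ • y') := fun g hg => funext fun l => by
    rw [hFe g hg, inv_inv]
    exact hfin y (by simp) y' (by simp) l (σ l) (hσ l) g hg
  rw [hfs y _ hyσ, hfe, inv_inv, hσa]

theorem exists_mem_eqOn (P : Finset X) : ∃ g ∈ F, ∀ z ∈ P, g z = f z := by
  classical
  obtain ⟨g₀, hg₀, hfin⟩ := hF.exists_mem_finest hne P
  let u (s : P × ι) : V := g₀ s.1 s.2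
  have hfu : (fun s : P × ι => f s.1 s.2).FactorsThrough u := fun s t hst =>
    hF.apply_eq_of_forall_mem_apply_eq hne hFe hfe hfs (hfin _ s.1.2 _ t.1.2 _ _ hst)
  obtain ⟨θ, hθ⟩ := exists_forall_apply_eq_of_finite (finite_range u)
    fun v => extend u (fun s : P × ι => f s.1 s.2) 0 v
  refine ⟨blockwise (θ.comp .fst) g₀ g₀, hF.blockwise_mem _ _ hg₀ _ hg₀,
    fun z hz => funext fun i => ?_⟩
  simpa using (hθ ⟨u (⟨z, hz⟩, i), mem_range_self _⟩).trans (hfu.extend_apply 0 (⟨z, hz⟩, i))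

end IsBlockClosed

end Blocks

theorem stmt12_general {X : Type*} [TopologicalSpace X] [CompactSpace X] {n p : ℕ}
    [MulAction (Equiv.Perm (Fin n)) X]
    (F : Set C(X, Fin n → Fin p → ℝ)) (hne : F.Nonempty)
    (hequiv : ∀ f ∈ F, ∀ σ : Equiv.Perm (Fin n), ∀ x : X, ∀ i : Fin n,
      f (σ • x) i = f x (σ⁻¹ i))
    (h1 : ∀ h : C((Fin p → ℝ) × (Fin p → ℝ), Fin p → ℝ), ∀ f ∈ F, ∀ g ∈ F,
      ∀ k : C(X, Fin n → Fin p → ℝ),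
        (∀ x : X, ∀ i : Fin n, k x i = h (f x i, g x i)) → k ∈ F)
    (h2 : ∀ f ∈ F, ∀ k : C(X, Fin n → Fin p → ℝ),
      (∀ x : X, ∀ i : Fin n, k x i = ∑ j : Fin n, f x j) → k ∈ F) :
    closure F = {f : C(X, Fin n → Fin p → ℝ) |
        (∀ σ : Equiv.Perm (Fin n), ∀ x : X, ∀ i : Fin n, f (σ • x) i = f x (σ⁻¹ i)) ∧
        ∀ x x' : X, (∀ h ∈ F, h x = h x') → f x = f x'} := by
  refine subset_antisymm (closure_minimal (fun f hf => ⟨hequiv f hf, fun x x' h => h f hf⟩) ?_)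
    fun f ⟨hfe, hfs⟩ => ?_
  · simp only [ofPred_and, ofPred_forall]
    refine .inter ?_ ?_ <;> repeat refine isClosed_iInter fun _ => ?_
    all_goals exact isClosed_eq (by fun_prop) (by fun_prop)
  rcases eq_or_ne p 0 with rfl | hp
  · simpa [Subsingleton.elim f hne.some] using subset_closure hne.some_mem
  have : Nonempty (Fin p) := ⟨⟨0, Nat.pos_of_ne_zero hp⟩⟩
  have hF : IsBlockClosed F :=
    ⟨fun θ f hf g hg => h1 θ f hf g hg _ fun _ _ => rfl, fun f hf => h2 f hf _ fun _ _ => rfl⟩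
  refine hF.mem_closure hne fun x x' => ?_
  classical
  obtain ⟨g, hg, hgf⟩ := hF.exists_mem_eqOn hne hequiv hfe hfs {x, x'}
  exact ⟨g, hg, hgf x (by simp), hgf x' (by simp)⟩

/-- Equivariant Stone-Weierstrass theorem for node embeddings (symmetric group acting
on blocks of features). -/
theorem stmt12 {X : Type*} [TopologicalSpace X] [CompactSpace X] {n p : ℕ}
    [MulAction (Equiv.Perm (Fin n)) X] [ContinuousConstSMul (Equiv.Perm (Fin n)) X]
    (F : Set C(X, Fin n → Fin p → ℝ)) (hne : F.Nonempty)
    (hequiv : ∀ f ∈ F, ∀ σ : Equiv.Perm (Fin n), ∀ x : X, ∀ i : Fin n,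
      f (σ • x) i = f x (σ⁻¹ i))
    (h1 : ∀ h : C((Fin p → ℝ) × (Fin p → ℝ), Fin p → ℝ), ∀ f ∈ F, ∀ g ∈ F,
      ∀ k : C(X, Fin n → Fin p → ℝ),
        (∀ x : X, ∀ i : Fin n, k x i = h (f x i, g x i)) → k ∈ F)
    (h2 : ∀ f ∈ F, ∀ k : C(X, Fin n → Fin p → ℝ),
      (∀ x : X, ∀ i : Fin n, k x i = ∑ j : Fin n, f x j) → k ∈ F) :
    closure F = {f : C(X, Fin n → Fin p → ℝ) |
        (∀ σ : Equiv.Perm (Fin n), ∀ x : X, ∀ i : Fin n, f (σ • x) i = f x (σ⁻¹ i)) ∧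
        ∀ x x' : X, (∀ h ∈ F, h x = h x') → f x = f x'} :=
  stmt12_general F hne hequiv h1 h2
end

section
/- Let 𝔽 = ℝ^p and let x₁,…,x_n, y₁,…,y_n ∈ 𝔽 be such that for every permutation σ ∈ S_n, (x₁,…,x_n) ≠ (y_{σ(1)},…,y_{σ(n)}). Then there exist nonnegative integers α₁,…,α_p such that Σᵢ x_{i1}^{α₁}·x_{i2}^{α₂}⋯x_{ip}^{α_p} ≠ Σᵢ y_{i1}^{α₁}·y_{i2}^{α₂}⋯y_{ip}^{α_p}. In particular, there is a continuous function h : 𝔽 → ℝ of product form h(z) = h₁(z₁)⋯h_p(z_p) with Σᵢ h(xᵢ) ≠ Σᵢ h(yᵢ). -/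
/-!
If all power sums `∑ᵢ xᵢ^α` agree, then by linearity `∑ᵢ f(xᵢ) = ∑ᵢ f(yᵢ)` for every polynomial
`f`. Over a field, finitely many points can be separated by polynomials: for each point `a`
there is a product of affine factors `(X j - b j) / (a j - b j)` that is `1` at `a` and vanishes
at the other points. Summing it over the `xᵢ` and the `yᵢ` counts how often `a` occurs in each
family, so the two multisets agree (in characteristic zero), and the families differ by a
permutation.
-/

open Finset MvPolynomial

namespace MvPolynomial

variable {σ K : Type*}

theorem exists_eval_eq_one_eval_eq_zero [Field K] {a b : σ → K} (hab : a ≠ b) :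
    ∃ f : MvPolynomial σ K, eval a f = 1 ∧ eval b f = 0 := by
  obtain ⟨j, hj⟩ := Function.ne_iff.mp hab
  refine ⟨C (a j - b j)⁻¹ * (X j - C (b j)), ?_, by simp⟩
  simpa using inv_mul_cancel₀ (sub_ne_zero.mpr hj)

theorem exists_eval_eq_one_forall_eval_eq_zero [Field K] (a : σ → K) (S : Finset (σ → K)) :
    ∃ f : MvPolynomial σ K, eval a f = 1 ∧ ∀ b ∈ S, b ≠ a → eval b f = 0 := by
  classical
  induction S using Finset.induction_on with
  | empty => exact ⟨1, by simp, by simp⟩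
  | insert b S _ ih =>
    obtain ⟨f, hfa, hfS⟩ := ih
    by_cases hba : b = a
    · refine ⟨f, hfa, ?_⟩
      simpa [hba] using hfS
    · obtain ⟨g, hga, hgb⟩ := exists_eval_eq_one_eval_eq_zero (Ne.symm hba)
      refine ⟨f * g, by simp [hfa, hga], ?_⟩
      simp only [mem_insert, forall_eq_or_imp, map_mul]
      exact ⟨fun _ => by simp [hgb], fun c hc hca => by simp [hfS c hc hca]⟩

theorem multiset_eq_of_forall_sum_map_eval_eq [Field K] [CharZero K] {s t : Multiset (σ → K)}
    (h : ∀ f : MvPolynomial σ K, (s.map (eval · f)).sum = (t.map (eval · f)).sum) :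
    s = t := by
  classical
  ext a
  obtain ⟨f, hfa, hf⟩ := exists_eval_eq_one_forall_eval_eq_zero a (s.toFinset ∪ t.toFinset)
  have hcount : ∀ u ≤ s + t, (u.map (eval · f)).sum = u.count a := by
    intro u hu
    rw [Multiset.sum_map_eq_nsmul_single a fun b hba hbu => hf b ?_ hba, hfa, nsmul_one]
    simpa using Multiset.mem_add.mp (Multiset.mem_of_le hu hbu)
  exact_mod_cast (hcount s (by simp)).symm.trans ((h f).trans (hcount t (by simp)))

theorem sum_eval_eq_of_forall_sum_prod_pow_eq {ι : Type*} [CommSemiring K] [Fintype ι]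
    [Fintype σ] {x y : ι → σ → K}
    (h : ∀ α : σ → ℕ, ∑ i, ∏ j, x i j ^ α j = ∑ i, ∏ j, y i j ^ α j)
    (f : MvPolynomial σ K) : ∑ i, eval (x i) f = ∑ i, eval (y i) f := by
  induction f using MvPolynomial.induction_on' with
  | monomial α r => simp only [eval_monomial, Finsupp.prod_pow, ← mul_sum, h]
  | add f g hf hg => simp only [map_add, sum_add_distrib, hf, hg]

end MvPolynomial

theorem Fintype.exists_perm_eq_comp_of_map_univ_val_eq {ι α : Type*} [Fintype ι] {x y : ι → α}
    (h : univ.val.map x = univ.val.map y) : ∃ σ : Equiv.Perm ι, x = y ∘ σ := by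
  classical
  have hfiber : ∀ a, Fintype.card {i // x i = a} = Fintype.card {i // y i = a} := by
    intro a
    simpa [Multiset.count_map, Fintype.card_subtype, eq_comm, ← Finset.filter_val] using
      congrArg (Multiset.count a) h
  let e : ∀ a, {i // x i = a} ≃ {i // y i = a} := fun a => Fintype.equivOfCardEq (hfiber a)
  refine ⟨(Equiv.sigmaFiberEquiv x).symm.trans
    ((Equiv.sigmaCongrRight e).trans (Equiv.sigmaFiberEquiv y)), funext fun i => ?_⟩
  exact ((e (x i)) ⟨i, rfl⟩).2.symm

/-- Power-sum multi-symmetric polynomials separate multisets of vectors in `ℝ^p`. -/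
theorem stmt13 {p n : ℕ} (x y : Fin n → Fin p → ℝ)
    (hxy : ∀ σ : Equiv.Perm (Fin n), x ≠ fun i => y (σ i)) :
    (∃ α : Fin p → ℕ,
      ∑ i : Fin n, ∏ j : Fin p, (x i j) ^ (α j) ≠
        ∑ i : Fin n, ∏ j : Fin p, (y i j) ^ (α j)) ∧
    ∃ h : Fin p → ℝ → ℝ, (∀ j : Fin p, Continuous (h j)) ∧
      ∑ i : Fin n, ∏ j : Fin p, h j (x i j) ≠ ∑ i : Fin n, ∏ j : Fin p, h j (y i j) := by
  obtain ⟨α, hα⟩ : ∃ α : Fin p → ℕ,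
      ∑ i, ∏ j, x i j ^ α j ≠ ∑ i, ∏ j, y i j ^ α j := by
    by_contra! hpow
    have hmultiset : univ.val.map x = univ.val.map y :=
      multiset_eq_of_forall_sum_map_eval_eq fun f => by
        simpa only [sum_eq_multiset_sum, Multiset.map_map, Function.comp_def] using
          sum_eval_eq_of_forall_sum_prod_pow_eq hpow f
    obtain ⟨σ, hσ⟩ := Fintype.exists_perm_eq_comp_of_map_univ_val_eq hmultiset
    exact hxy σ hσ
  exact ⟨⟨α, hα⟩, fun j t => t ^ α j, fun j => continuous_pow _, hα⟩
end

section
/- Let X be a compact subset of ℝ^n, and let F = {x ↦ g(Σᵢ f(xᵢ)) : f ∈ C(ℝ, ℝ^h), g ∈ C(ℝ^h, ℝ), h ≥ 1} be the set of invariant PointNet-type functions. Then sep(F) = {(x, σ⋆x) : x ∈ X, σ ∈ S_n}, where (σ⋆x)_{σ(i)} = x_i, and consequently the uniform closure of F is the set C_I(X, ℝ) of all continuous S_n-invariant real-valued functions on X. -/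
/-!
The power sums `∑ᵢ xᵢ ^ m`, `1 ≤ m ≤ n`, are PointNet functions, and by Newton's identities they
determine the elementary symmetric functions of the coordinates, hence the multiset of
coordinates; so PointNet functions separate exactly the `Sₙ`-orbits. Conversely, a continuous
invariant `k` is constant on the fibres of the moment map `φ x = ∑ᵢ (xᵢ, xᵢ², …, xᵢⁿ)`. On the
compact set `X`, `φ` is a closed map, so `k` descends to a continuous function on `φ(X)`, which
Tietze extends to all of `ℝⁿ`: `k` is itself a PointNet function. Thus PointNet functions are
already the (closed) set of continuous invariant functions.
-/

open Finset Topology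

section PowerSums

variable {ι K : Type*} [Fintype ι] [CommRing K] [IsDomain K] [CharZero K]

open MvPolynomial in
theorem Multiset.esymm_map_univ_eq_of_sum_pow_eq {x y : ι → K} {N : ℕ}
    (h : ∀ m, 0 < m → m ≤ N → ∑ i, x i ^ m = ∑ i, y i ^ m) {k : ℕ} (hk : k ≤ N) :
    (univ.val.map x).esymm k = (univ.val.map y).esymm k := by
  induction k using Nat.strong_induction_on with
  | _ k ih =>
  simp only [← aeval_esymm_eq_multiset_esymm ι K] at ih ⊢
  rcases k.eq_zero_or_pos with rfl | hk0
  · simp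
  have newton (z : ι → K) := congrArg (aeval z) (mul_esymm_eq_sum ι K k)
  simp only [map_mul, map_natCast, map_pow, map_neg, map_one, map_sum] at newton
  refine mul_left_cancel₀ (Nat.cast_ne_zero.mpr hk0.ne') ?_
  rw [newton x, newton y]
  congr 1
  refine Finset.sum_congr rfl fun a ha => ?_
  rw [Finset.mem_filter, Finset.HasAntidiagonal.mem_antidiagonal] at ha
  have hpsum (z : ι → K) : aeval z (psum ι K a.2) = ∑ i, z i ^ a.2 := by simp [psum]
  rw [ih a.1 ha.2 (by omega), hpsum, hpsum, h a.2 (by omega) (by omega)]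

theorem Multiset.map_univ_eq_of_sum_pow_eq {x y : ι → K}
    (h : ∀ m, 0 < m → m ≤ Fintype.card ι → ∑ i, x i ^ m = ∑ i, y i ^ m) :
    univ.val.map x = univ.val.map y := by
  open Polynomial in
  have hprod : ((univ.val.map x).map fun a => X - C a).prod =
      ((univ.val.map y).map fun a => X - C a).prod := by
    simp only [prod_X_sub_X_eq_sum_esymm, card_map]
    refine Finset.sum_congr rfl fun j hj => ?_
    rw [esymm_map_univ_eq_of_sum_pow_eq h (Nat.lt_succ_iff.mp (mem_range.mp hj))]
  rw [← roots_multiset_prod_X_sub_C (univ.val.map x), hprod, roots_multiset_prod_X_sub_C]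

end PowerSums

theorem Equiv.Perm.exists_eq_comp_of_map_univ_eq {α β : Type*} [Fintype α] {x y : α → β}
    (h : univ.val.map x = univ.val.map y) : ∃ σ : Equiv.Perm α, y = x ∘ ⇑σ⁻¹ := by
  classical
  have hfiber (b : β) : Fintype.card {a // y a = b} = Fintype.card {a // x a = b} := by
    have := congrArg (Multiset.count b) h
    simp only [Multiset.count_map, eq_comm (a := b)] at this
    simp only [Fintype.card_subtype, Finset.card, Finset.filter_val, this]
  refine ⟨(Equiv.ofFiberEquiv fun b => Fintype.equivOfCardEq (hfiber b))⁻¹, ?_⟩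
  funext a
  exact (Equiv.ofFiberEquiv_map _ a).symm

def powMoments (n : ℕ) : C(ℝ, Fin n → ℝ) :=
  ⟨fun t j => t ^ ((j : ℕ) + 1), by fun_prop⟩

theorem exists_perm_of_sum_powMoments_eq {ι : Type*} [Fintype ι] {x y : ι → ℝ}
    (h : ∑ i, powMoments (Fintype.card ι) (x i) = ∑ i, powMoments (Fintype.card ι) (y i)) :
    ∃ σ : Equiv.Perm ι, y = fun i => x (σ⁻¹ i) := by
  refine Equiv.Perm.exists_eq_comp_of_map_univ_eq (Multiset.map_univ_eq_of_sum_pow_eq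
    fun m hm hmn => ?_)
  simpa [powMoments, Nat.sub_add_cancel hm] using congrFun h ⟨m - 1, by omega⟩

universe u v

theorem ContinuousMap.exists_comp_eq_of_factorsThrough {X : Type*} {Z : Type u} {Y : Type v}
    [TopologicalSpace X] [CompactSpace X] [TopologicalSpace Z] [T2Space Z] [NormalSpace Z]
    [TopologicalSpace Y] [TietzeExtension.{u, v} Y] (φ : C(X, Z)) (k : C(X, Y))
    (hk : Function.FactorsThrough k φ) :
    ∃ G : C(Z, Y), G.comp φ = k := by
  let ψ : C(X, Set.range φ) := ⟨Set.rangeFactorization φ, φ.continuous.rangeFactorization⟩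
  have hψ : IsQuotientMap ψ := φ.continuous.isClosedMap.isStrictMap φ.continuous
  have hkψ : Function.FactorsThrough k ψ := fun a b hab => hk (congrArg Subtype.val hab)
  obtain ⟨G, hG⟩ := (hψ.lift k hkψ).exists_restrict_eq (isCompact_range φ.continuous).isClosed
  refine ⟨G, ?_⟩
  rw [← hψ.lift_comp k hkψ, ← hG]
  rfl

section PointNet

variable {ι : Type*} (X : Set (ι → ℝ))

def permInvariant : Set C(X, ℝ) :=
  {k | ∀ x x' : X,
    (∃ σ : Equiv.Perm ι, (x' : ι → ℝ) = fun i => (x : ι → ℝ) (σ⁻¹ i)) → k x = k x'}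

theorem isClosed_permInvariant : IsClosed (permInvariant X) := by
  simp only [permInvariant, Set.ofPred_forall]
  exact isClosed_iInter fun x => isClosed_iInter fun x' => isClosed_iInter fun _ =>
    isClosed_eq (continuous_eval_const x) (continuous_eval_const x')

variable [Fintype ι]

def sumPool {E : Type*} [TopologicalSpace E] [AddCommMonoid E] [ContinuousAdd E] (f : C(ℝ, E)) :
    C(X, E) :=
  ⟨fun x => ∑ i, f ((x : ι → ℝ) i),
    continuous_finsetSum _ fun i _ =>
      f.continuous.comp ((continuous_apply i).comp continuous_subtype_val)⟩

def pointNet : Set C(X, ℝ) :=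
  {k | ∃ h : ℕ, ∃ f : C(ℝ, Fin h → ℝ), ∃ g : C(Fin h → ℝ, ℝ),
    ∀ x : X, k x = g (∑ i, f ((x : ι → ℝ) i))}

theorem comp_sumPool_mem_pointNet {h : ℕ} (f : C(ℝ, Fin h → ℝ)) (g : C(Fin h → ℝ, ℝ)) :
    g.comp (sumPool X f) ∈ pointNet X :=
  ⟨h, f, g, fun _ => rfl⟩

theorem pointNet_subset_permInvariant : pointNet X ⊆ permInvariant X := by
  rintro k ⟨h, f, g, hk⟩ x x' ⟨σ, hσ⟩
  rw [hk, hk, hσ, Equiv.sum_comp σ⁻¹ fun i => f ((x : ι → ℝ) i)]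

theorem exists_perm_of_forall_pointNet_eq {x x' : X} (h : ∀ k ∈ pointNet X, k x = k x') :
    ∃ σ : Equiv.Perm ι, (x' : ι → ℝ) = fun i => (x : ι → ℝ) (σ⁻¹ i) :=
  exists_perm_of_sum_powMoments_eq <| funext fun j =>
    h _ (comp_sumPool_mem_pointNet X _ (ContinuousMap.eval j))

theorem permInvariant_subset_pointNet (hX : IsCompact X) : permInvariant X ⊆ pointNet X := by
  intro k hk
  have : CompactSpace X := isCompact_iff_compactSpace.mp hX
  obtain ⟨G, rfl⟩ := (sumPool X (powMoments (Fintype.card ι))).exists_comp_eq_of_factorsThrough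
    k fun x x' hxx' => hk x x' (exists_perm_of_sum_powMoments_eq hxx')
  exact comp_sumPool_mem_pointNet X _ G

end PointNet

theorem stmt14_general {n : ℕ} (X : Set (Fin n → ℝ)) (hX : IsCompact X)
    (F : Set C(X, ℝ))
    (hF : F = {k : C(X, ℝ) | ∃ h : ℕ, ∃ f : C(ℝ, Fin h → ℝ), ∃ g : C(Fin h → ℝ, ℝ),
      ∀ x : X, k x = g (∑ i : Fin n, f ((x : Fin n → ℝ) i))}) :
    (∀ x x' : X, (∀ k ∈ F, k x = k x') ↔
      ∃ σ : Equiv.Perm (Fin n), (x' : Fin n → ℝ) = fun i => (x : Fin n → ℝ) (σ⁻¹ i)) ∧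
    closure F = {k : C(X, ℝ) | ∀ x x' : X,
      (∃ σ : Equiv.Perm (Fin n), (x' : Fin n → ℝ) = fun i => (x : Fin n → ℝ) (σ⁻¹ i)) →
        k x = k x'} := by
  subst hF
  have hF : pointNet X = permInvariant X :=
    (pointNet_subset_permInvariant X).antisymm (permInvariant_subset_pointNet X hX)
  refine ⟨fun x x' => ⟨exists_perm_of_forall_pointNet_eq X, fun hσ k hk => ?_⟩, ?_⟩
  · exact pointNet_subset_permInvariant X hk x x' hσ
  · exact (congrArg closure hF).trans (isClosed_permInvariant X).closure_eq

/-- Universality of invariant PointNet: its separating power is exactly the orbit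
equivalence relation of `S_n`, and its uniform closure is the set of all continuous
invariant functions. -/
theorem stmt14 {n : ℕ} (X : Set (Fin n → ℝ)) (hX : IsCompact X)
    (hXinv : ∀ σ : Equiv.Perm (Fin n), ∀ x ∈ X, (fun i => x (σ⁻¹ i)) ∈ X)
    (F : Set C(X, ℝ))
    (hF : F = {k : C(X, ℝ) | ∃ h : ℕ, ∃ f : C(ℝ, Fin h → ℝ), ∃ g : C(Fin h → ℝ, ℝ),
      ∀ x : X, k x = g (∑ i : Fin n, f ((x : Fin n → ℝ) i))}) :
    (∀ x x' : X, (∀ k ∈ F, k x = k x') ↔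
      ∃ σ : Equiv.Perm (Fin n), (x' : Fin n → ℝ) = fun i => (x : Fin n → ℝ) (σ⁻¹ i)) ∧
    closure F = {k : C(X, ℝ) | ∀ x x' : X,
      (∃ σ : Equiv.Perm (Fin n), (x' : Fin n → ℝ) = fun i => (x : Fin n → ℝ) (σ⁻¹ i)) →
        k x = k x'} :=
  stmt14_general X hX F hF
end

section
/- Let X be a compact subset of ℝ^n and F = {x ↦ (f(x₁),…,f(x_n)) : f ∈ C(ℝ,ℝ)} ⊆ C(X, ℝ^n). Then F is a subalgebra of C(X, ℝ^n) containing the constant function 1, every element of F is S_n-equivariant, and sep(F) = {(x,x) : x ∈ X}; yet F is not dense in C(X, ℝ^n) whenever C_E(X,ℝ^n) ≠ C(X,ℝ^n), since the closure of F is contained in the (closed) set C_E(X, ℝ^n) of equivariant functions. -/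
/-!
Applying one continuous `f` to every coordinate commutes with permuting the coordinates.
Equivariance is an intersection of pointwise equations `k x' = σ • k x`, each closed since
evaluation is continuous on `C(X, ℝⁿ)`; so the closure of `F` stays inside the equivariant maps.
-/

namespace CoordwiseMaps

variable {ι α β : Type*} [TopologicalSpace α] [TopologicalSpace β]

def coordwiseMaps (X : Set (ι → α)) : Set C(X, ι → β) :=
  {k | ∃ f : C(α, β), ∀ x : X, k x = fun i => f ((x : ι → α) i)}

def equivariantMaps (X : Set (ι → α)) : Set C(X, ι → β) :=
  {k | ∀ σ : Equiv.Perm ι, ∀ x x' : X, ((x' : ι → α) = fun i => (x : ι → α) (σ⁻¹ i)) →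
    k x' = fun i => k x (σ⁻¹ i)}

variable {X : Set (ι → α)}

theorem one_mem_coordwiseMaps [One β] : (1 : C(X, ι → β)) ∈ coordwiseMaps X :=
  ⟨1, fun _ => rfl⟩

theorem add_mem_coordwiseMaps [Add β] [ContinuousAdd β] {k l : C(X, ι → β)}
    (hk : k ∈ coordwiseMaps X) (hl : l ∈ coordwiseMaps X) : k + l ∈ coordwiseMaps X := by
  obtain ⟨f, hf⟩ := hk
  obtain ⟨g, hg⟩ := hl
  exact ⟨f + g, fun x => by simp [hf x, hg x, Pi.add_def]⟩

theorem mul_mem_coordwiseMaps [Mul β] [ContinuousMul β] {k l : C(X, ι → β)}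
    (hk : k ∈ coordwiseMaps X) (hl : l ∈ coordwiseMaps X) : k * l ∈ coordwiseMaps X := by
  obtain ⟨f, hf⟩ := hk
  obtain ⟨g, hg⟩ := hl
  exact ⟨f * g, fun x => by simp [hf x, hg x, Pi.mul_def]⟩

theorem smul_mem_coordwiseMaps {R : Type*} [SMul R β] [ContinuousConstSMul R β] (c : R)
    {k : C(X, ι → β)} (hk : k ∈ coordwiseMaps X) : c • k ∈ coordwiseMaps X := by
  obtain ⟨f, hf⟩ := hk
  exact ⟨c • f, fun x => by simp [hf x, Pi.smul_def]⟩

theorem coordwiseMaps_separatesPoints {x x' : X}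
    (h : ∀ k ∈ (coordwiseMaps X : Set C(X, ι → α)), k x = k x') : x = x' :=
  Subtype.ext <| h ⟨Subtype.val, continuous_subtype_val⟩ ⟨ContinuousMap.id α, fun _ => rfl⟩

theorem coordwiseMaps_subset_equivariantMaps :
    (coordwiseMaps X : Set C(X, ι → β)) ⊆ equivariantMaps X := by
  rintro k ⟨f, hf⟩ σ x x' hx'
  simp [hf, hx']

theorem isClosed_equivariantMaps [T2Space β] : IsClosed (equivariantMaps X : Set C(X, ι → β)) := by
  simp only [equivariantMaps, Set.ofPred_forall]
  refine isClosed_iInter fun σ => isClosed_iInter fun x => isClosed_iInter fun x' =>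
    isClosed_iInter fun _ => isClosed_eq (continuous_eval_const x') ?_
  exact continuous_pi fun i => (continuous_apply (σ⁻¹ i)).comp (continuous_eval_const x)

theorem closure_coordwiseMaps_subset_equivariantMaps [T2Space β] :
    closure (coordwiseMaps X : Set C(X, ι → β)) ⊆ equivariantMaps X :=
  closure_minimal coordwiseMaps_subset_equivariantMaps isClosed_equivariantMaps

end CoordwiseMaps

open CoordwiseMaps in
theorem stmt15_general {n : ℕ} (X : Set (Fin n → ℝ))
    (F : Set C(X, Fin n → ℝ))
    (hF : F = {k : C(X, Fin n → ℝ) | ∃ f : C(ℝ, ℝ),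
      ∀ x : X, k x = fun i => f ((x : Fin n → ℝ) i)}) :
    ((1 : C(X, Fin n → ℝ)) ∈ F) ∧
    (∀ f ∈ F, ∀ g ∈ F, f + g ∈ F ∧ f * g ∈ F) ∧
    (∀ c : ℝ, ∀ f ∈ F, c • f ∈ F) ∧
    (∀ k ∈ F, ∀ σ : Equiv.Perm (Fin n), ∀ x x' : X,
      ((x' : Fin n → ℝ) = fun i => (x : Fin n → ℝ) (σ⁻¹ i)) →
        k x' = fun i => k x (σ⁻¹ i)) ∧
    (∀ x x' : X, (∀ k ∈ F, k x = k x') → x = x') ∧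
    closure F ⊆ {k : C(X, Fin n → ℝ) | ∀ σ : Equiv.Perm (Fin n), ∀ x x' : X,
      ((x' : Fin n → ℝ) = fun i => (x : Fin n → ℝ) (σ⁻¹ i)) →
        k x' = fun i => k x (σ⁻¹ i)} ∧
    (({k : C(X, Fin n → ℝ) | ∀ σ : Equiv.Perm (Fin n), ∀ x x' : X,
        ((x' : Fin n → ℝ) = fun i => (x : Fin n → ℝ) (σ⁻¹ i)) →
          k x' = fun i => k x (σ⁻¹ i)} ≠ Set.univ) →
      closure F ≠ Set.univ) := by
  subst hF
  have hclosure := closure_coordwiseMaps_subset_equivariantMaps (X := X) (β := ℝ)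
  refine ⟨one_mem_coordwiseMaps,
    fun f hf g hg => ⟨add_mem_coordwiseMaps hf hg, mul_mem_coordwiseMaps hf hg⟩,
    fun c f hf => smul_mem_coordwiseMaps c hf,
    coordwiseMaps_subset_equivariantMaps,
    fun x x' h => coordwiseMaps_separatesPoints h,
    hclosure, fun hne hdense => hne ?_⟩
  exact Set.eq_univ_of_univ_subset (hdense ▸ hclosure)

/-- Equivariant PointNet without transmission: a unital point-separating subalgebra of
vector-valued functions need not be dense, since its closure consists of equivariant
functions. -/
theorem stmt15 {n : ℕ} (X : Set (Fin n → ℝ)) (hX : IsCompact X)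
    (hXinv : ∀ σ : Equiv.Perm (Fin n), ∀ x ∈ X, (fun i => x (σ⁻¹ i)) ∈ X)
    (F : Set C(X, Fin n → ℝ))
    (hF : F = {k : C(X, Fin n → ℝ) | ∃ f : C(ℝ, ℝ),
      ∀ x : X, k x = fun i => f ((x : Fin n → ℝ) i)}) :
    ((1 : C(X, Fin n → ℝ)) ∈ F) ∧
    (∀ f ∈ F, ∀ g ∈ F, f + g ∈ F ∧ f * g ∈ F) ∧
    (∀ c : ℝ, ∀ f ∈ F, c • f ∈ F) ∧
    (∀ k ∈ F, ∀ σ : Equiv.Perm (Fin n), ∀ x x' : X,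
      ((x' : Fin n → ℝ) = fun i => (x : Fin n → ℝ) (σ⁻¹ i)) →
        k x' = fun i => k x (σ⁻¹ i)) ∧
    (∀ x x' : X, (∀ k ∈ F, k x = k x') → x = x') ∧
    closure F ⊆ {k : C(X, Fin n → ℝ) | ∀ σ : Equiv.Perm (Fin n), ∀ x x' : X,
      ((x' : Fin n → ℝ) = fun i => (x : Fin n → ℝ) (σ⁻¹ i)) →
        k x' = fun i => k x (σ⁻¹ i)} ∧
    (({k : C(X, Fin n → ℝ) | ∀ σ : Equiv.Perm (Fin n), ∀ x x' : X,
        ((x' : Fin n → ℝ) = fun i => (x : Fin n → ℝ) (σ⁻¹ i)) →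
          k x' = fun i => k x (σ⁻¹ i)} ≠ Set.univ) →
      closure F ≠ Set.univ) :=
  stmt15_general X F hF
end
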